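/- arXiv:2412.09519 — 10 statements merged into one kernel-verified Lean document; each statement's English description precedes it below -/
import Mathlib

section
/- Let D = Σ a_i ∂/∂x_i be a derivation of k[x_1,...,x_n] such that a_i ∈ k[x_{s+1},...,x_n] for all i > s. Then D restricts to a derivation of k[x_{s+1},...,x_n], and if D is simple, this restriction is also a simple derivation. -/
open MvPolynomial

/-- If `D (X i) ∈ k[x_{s+1},…,xₙ]` for all `i ≥ s` (0-indexed), then `D`
restricts to a derivation of `B = k[x_{s+1},…,xₙ]`; if moreover `D` is simple then the
restriction is a simple derivation of `B`. -/
theorem stmt2 {k : Type} [Field k] [CharZero k] {n s : ℕ}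
    (D : Derivation k (MvPolynomial (Fin n) k) (MvPolynomial (Fin n) k))
    (B : Subalgebra k (MvPolynomial (Fin n) k))
    (hB : B = Algebra.adjoin k ((fun i : Fin n => X i) '' {i : Fin n | s ≤ (i : ℕ)}))
    (hD : ∀ i : Fin n, s ≤ (i : ℕ) → D (X i) ∈ B) :
    (∀ b ∈ B, D b ∈ B) ∧
    ((∀ I : Ideal (MvPolynomial (Fin n) k), (∀ f ∈ I, D f ∈ I) → I = ⊥ ∨ I = ⊤) →
      ∀ J : Ideal B, (∀ x ∈ J, ∃ y ∈ J, (y : MvPolynomial (Fin n) k) = D (x : MvPolynomial (Fin n) k)) →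
        J = ⊥ ∨ J = ⊤) := by
  have part1 : ∀ b ∈ B, D b ∈ B := by
    intro b hb
    rw [hB] at hb
    induction hb using Algebra.adjoin_induction with
    | mem x hx =>
      obtain ⟨i, hi, rfl⟩ := hx
      exact hD i hi
    | algebraMap r => simp [Derivation.map_algebraMap]
    | add x y hx hy ihx ihy => rw [map_add]; exact add_mem ihx ihy
    | mul x y hx hy ihx ihy =>
      rw [D.leibniz, smul_eq_mul, smul_eq_mul]
      rw [hB] at ihx ihy ⊢
      exact add_mem (mul_mem hx ihy) (mul_mem hy ihx)
  refine ⟨part1, ?_⟩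
  intro hsimple J hJ
  set I : Ideal (MvPolynomial (Fin n) k) := Ideal.span ((↑) '' (J : Set B)) with hI
  have hDI : ∀ f ∈ I, D f ∈ I := by
    intro f hf
    induction hf using Submodule.span_induction with
    | mem x hx =>
      obtain ⟨j, hj, rfl⟩ := hx
      obtain ⟨y, hy, hyx⟩ := hJ j hj
      rw [← hyx]
      exact Ideal.subset_span ⟨y, hy, rfl⟩
    | zero => simp
    | add x y hx hy ihx ihy => rw [map_add]; exact add_mem ihx ihy
    | smul a x hx ihx =>
      rw [smul_eq_mul, D.leibniz, smul_eq_mul, smul_eq_mul]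
      exact add_mem (Ideal.mul_mem_left _ _ ihx) (Ideal.mul_mem_right _ _ hx)
  -- retraction
  have hg : ∀ i : Fin n, s ≤ (i : ℕ) → (X i : MvPolynomial (Fin n) k) ∈ B := by
    intro i hi; rw [hB]; exact Algebra.subset_adjoin ⟨i, hi, rfl⟩
  let g : Fin n → B := fun i => if h : s ≤ (i : ℕ) then ⟨X i, hg i h⟩ else 0
  let φ : MvPolynomial (Fin n) k →ₐ[k] B := aeval g
  have hφ : ∀ b ∈ B, ((φ b : B) : MvPolynomial (Fin n) k) = b := by
    intro b hb
    rw [hB] at hb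
    induction hb using Algebra.adjoin_induction with
    | mem x hx =>
      obtain ⟨i, hi, rfl⟩ := hx
      simp only [Set.mem_setOf_eq] at hi
      simp only [φ, aeval_X, g, dif_pos hi]
    | algebraMap r => simp [φ]
    | add x y hx hy ihx ihy => rw [map_add]; push_cast; rw [ihx, ihy]
    | mul x y hx hy ihx ihy => rw [map_mul]; push_cast; rw [ihx, ihy]
  have hIJ : I ≤ Ideal.comap φ.toRingHom J := by
    rw [hI, Ideal.span_le]
    rintro _ ⟨j, hj, rfl⟩
    show φ (j : MvPolynomial (Fin n) k) ∈ J
    have : φ (j : MvPolynomial (Fin n) k) = j := Subtype.ext (hφ _ j.2)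
    rw [this]; exact hj
  rcases hsimple I hDI with hbot | htop
  · left
    rw [eq_bot_iff]
    intro x hx
    have hxI : (x : MvPolynomial (Fin n) k) ∈ I := Ideal.subset_span ⟨x, hx, rfl⟩
    rw [hbot] at hxI
    have hx0 : (x : MvPolynomial (Fin n) k) = 0 := (Submodule.mem_bot _).mp hxI
    rw [Submodule.mem_bot]
    exact Subtype.ext hx0
  · right
    rw [Ideal.eq_top_iff_one]
    have h1 : (1 : MvPolynomial (Fin n) k) ∈ I := htop ▸ Submodule.mem_top
    have h2 := hIJ h1
    rw [Ideal.mem_comap, map_one] at h2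
    exact h2
end

section
/- If c ∈ k[u] is a polynomial in u alone and α ∈ k is a nonzero scalar, then the derivation δ = α ∂/∂u + c'(u) ∂/∂v of k[u,v] is not simple. -/
open MvPolynomial

/-- if `c ∈ k[u]` and `α ∈ k` is nonzero, then the derivation
`δ = α ∂/∂u + c'(u) ∂/∂v` of `k[u,v]` is not simple. -/
theorem stmt6 {k : Type} [Field k] [CharZero k]
    (c : Polynomial k) (α : k) (hα : α ≠ 0)
    (δ : Derivation k (MvPolynomial (Fin 2) k) (MvPolynomial (Fin 2) k))
    (hδu : δ (X 0) = C α)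
    (hδv : δ (X 1) = Polynomial.aeval (X 0 : MvPolynomial (Fin 2) k) (Polynomial.derivative c)) :
    ¬ (∀ I : Ideal (MvPolynomial (Fin 2) k), (∀ f ∈ I, δ f ∈ I) → I = ⊥ ∨ I = ⊤) := by
  intro h
  set g : MvPolynomial (Fin 2) k :=
    X 1 - C α⁻¹ * Polynomial.aeval (X 0 : MvPolynomial (Fin 2) k) c with hg
  -- δ kills g
  have hδg : δ g = 0 := by
    have hCδ : δ (C α⁻¹ : MvPolynomial (Fin 2) k) = 0 := by
      have := δ.map_algebraMap (α⁻¹)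
      simpa [MvPolynomial.algebraMap_eq] using this
    rw [hg, map_sub, Derivation.leibniz, hCδ, Derivation.map_aeval, hδu, hδv,
      smul_zero, add_zero, smul_eq_mul, smul_eq_mul]
    ring_nf
    rw [mul_assoc, ← C_mul, inv_mul_cancel₀ hα, C_1, mul_one, sub_self]
  -- the ideal generated by g is δ-stable
  have hstab : ∀ f ∈ Ideal.span {g}, δ f ∈ Ideal.span {g} := by
    intro f hf
    obtain ⟨a, rfl⟩ := Ideal.mem_span_singleton'.mp hf
    rw [Derivation.leibniz, hδg, smul_zero, zero_add, smul_eq_mul]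
    exact Ideal.mul_mem_right _ _ (Ideal.mem_span_singleton_self g)
  rcases h _ hstab with hbot | htop
  · -- g ≠ 0 : map via X0 ↦ 0, X1 ↦ X into k[X]
    have hg0 : g ∈ Ideal.span {g} := Ideal.mem_span_singleton_self g
    rw [hbot, Ideal.mem_bot] at hg0
    have := congrArg (MvPolynomial.aeval
      (![0, Polynomial.X] : Fin 2 → Polynomial k)) hg0
    rw [hg, map_sub, map_mul, map_zero, aeval_C, aeval_X,
      ← Polynomial.aeval_algHom_apply, aeval_X] at this
    simp only [Matrix.cons_val_zero, Matrix.cons_val_one, Matrix.head_cons] at this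
    rw [← Polynomial.coeff_zero_eq_aeval_zero', Polynomial.algebraMap_eq,
      ← Polynomial.C_mul] at this
    exact Polynomial.X_sub_C_ne_zero (α⁻¹ * c.coeff 0) this
  · -- span {g} is proper : evaluate at (0, α⁻¹ c(0))
    have h1 : (1 : MvPolynomial (Fin 2) k) ∈ Ideal.span {g} := htop ▸ Submodule.mem_top
    obtain ⟨a, ha⟩ := Ideal.mem_span_singleton'.mp h1
    have := congrArg (MvPolynomial.aeval
      (![0, α⁻¹ * Polynomial.aeval (0 : k) c])) ha
    rw [map_mul, map_one, hg, map_sub, map_mul, aeval_C, aeval_X,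
      ← Polynomial.aeval_algHom_apply, aeval_X] at this
    simp only [Matrix.cons_val_zero, Matrix.cons_val_one, Matrix.head_cons] at this
    simp only [Algebra.algebraMap_self_apply, sub_self, mul_zero] at this
    exact one_ne_zero this.symm
end

section
/- For the derivation δ = ∂/∂u + (1+uv) ∂/∂v of k[u,v], the intersection of the image of δ with k[v] equals k. In particular, Im(δ) ∩ k[v] contains no nonconstant polynomial in v. -/
open MvPolynomial

/-- coefficient of a partial derivative -/
lemma coeff_pderiv_aux {σ : Type*} [DecidableEq σ] {R : Type*} [CommRing R]
    (i : σ) (d : σ →₀ ℕ) (f : MvPolynomial σ R) :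
    coeff d (pderiv i f) = (d i + 1 : ℕ) * coeff (d + Finsupp.single i 1) f := by
  induction f using MvPolynomial.induction_on' with
  | add p q hp hq => simp [hp, hq, mul_add]
  | monomial s a =>
    rw [pderiv_monomial, coeff_monomial, coeff_monomial]
    by_cases h : s = d + Finsupp.single i 1
    · have h1 : s - Finsupp.single i 1 = d := by
        ext x; rw [h]; simp [Finsupp.tsub_apply, Finsupp.add_apply]
      have h2 : s i = d i + 1 := by
        rw [h]; simp
      rw [if_pos h1, if_pos h, h2]
      push_cast; ring
    · rw [if_neg h, mul_zero]
      split_ifs with h1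
      · by_cases hsi : s i = 0
        · rw [hsi]; simp
        · exfalso
          have hle : Finsupp.single i 1 ≤ s := Finsupp.single_le_iff.2 (by omega)
          exact h (by rw [← h1, tsub_add_cancel_of_le hle])
      · rfl

/-- the monomial exponent `u^a v^b` -/
noncomputable def mo (a b : ℕ) : Fin 2 →₀ ℕ :=
  Finsupp.single 0 a + Finsupp.single 1 b

lemma mo_apply0 (a b : ℕ) : mo a b 0 = a := by
  simp [mo, Finsupp.single_apply]

lemma mo_apply1 (a b : ℕ) : mo a b 1 = b := by
  simp [mo, Finsupp.single_apply]

lemma eq_mo (d : Fin 2 →₀ ℕ) : d = mo (d 0) (d 1) := by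
  ext x
  fin_cases x <;> simp [mo, Finsupp.single_apply]

lemma mo_add_single0 (a b : ℕ) : mo a b + Finsupp.single 0 1 = mo (a + 1) b := by
  ext x; fin_cases x <;> simp [mo, Finsupp.single_apply] <;> omega

lemma mo_add_single1 (a b : ℕ) : mo a b + Finsupp.single 1 1 = mo a (b + 1) := by
  ext x; fin_cases x <;> simp [mo, Finsupp.single_apply] <;> omega

lemma mo_succ_succ (a b : ℕ) :
    mo (a + 1) (b + 1) = Finsupp.single 0 1 + (Finsupp.single 1 1 + mo a b) := by
  ext x; fin_cases x <;> simp [mo, Finsupp.single_apply] <;> omega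

variable {k : Type} [Field k]

lemma coeff_uv_mul (a b : ℕ) (h : MvPolynomial (Fin 2) k) :
    coeff (mo (a + 1) (b + 1)) (X 0 * X 1 * h) = coeff (mo a b) h := by
  rw [mul_assoc, mo_succ_succ, coeff_X_mul, coeff_X_mul]

lemma coeff_uv_mul_zero (b : ℕ) (h : MvPolynomial (Fin 2) k) :
    coeff (mo 0 b) (X 0 * X 1 * h) = 0 := by
  classical
  rw [mul_assoc, coeff_X_mul', if_neg]
  simp [Finsupp.mem_support_iff, mo_apply0]

lemma coeff_aeval_X1 (q : Polynomial k) (d : Fin 2 →₀ ℕ) (hd : d 0 ≠ 0) :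
    coeff d (Polynomial.aeval (X 1 : MvPolynomial (Fin 2) k) q) = 0 := by
  classical
  induction q using Polynomial.induction_on' with
  | add p q hp hq => simp [hp, hq]
  | monomial n a =>
    rw [Polynomial.aeval_monomial, MvPolynomial.algebraMap_eq, coeff_C_mul,
      X_pow_eq_monomial, coeff_monomial, if_neg, mul_zero]
    intro hcon
    apply hd
    rw [← hcon]
    simp [Finsupp.single_apply]

lemma coeff_zero_of_big (g : MvPolynomial (Fin 2) k) (d : Fin 2 →₀ ℕ)
    (hd : g.totalDegree < d 0) : coeff d g = 0 := by
  by_contra h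
  have hmem : d ∈ g.support := mem_support_iff.2 h
  have : d 0 ≤ (d.sum fun _ e => e) := by
    rw [Finsupp.sum_fintype _ _ (fun _ => rfl)]
    exact Finset.single_le_sum (f := fun x => d x) (fun _ _ => Nat.zero_le _) (Finset.mem_univ 0)
  exact absurd (this.trans (le_totalDegree hmem)) (not_le.2 hd)

/-- for the derivation `δ = ∂/∂u + (1 + uv) ∂/∂v` of `k[u,v]`
(`u = X 0`, `v = X 1`), we have `Im(δ) ∩ k[v] = k`. -/
theorem stmt7 {k : Type} [Field k] [CharZero k] [IsAlgClosed k]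
    (δ : Derivation k (MvPolynomial (Fin 2) k) (MvPolynomial (Fin 2) k))
    (hδu : δ (X 0) = 1)
    (hδv : δ (X 1) = 1 + X 0 * X 1) :
    {f : MvPolynomial (Fin 2) k | ∃ g, δ g = f} ∩
        {f | ∃ p : Polynomial k, Polynomial.aeval (X 1 : MvPolynomial (Fin 2) k) p = f} =
      {f | ∃ cst : k, C cst = f} := by
  ext f
  simp only [Set.mem_inter_iff, Set.mem_setOf_eq]
  constructor
  · rintro ⟨⟨g, rfl⟩, q, hq⟩
    -- express δ via partial derivatives
    have hδ_eq : δ = pderiv (R := k) (0 : Fin 2) +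
        ((1 + X 0 * X 1 : MvPolynomial (Fin 2) k) • pderiv (R := k) (1 : Fin 2)) := by
      apply derivation_ext
      have h01 : pderiv (R := k) (1 : Fin 2) (X (0 : Fin 2)) = 0 :=
        pderiv_X_of_ne (by decide)
      have h10 : pderiv (R := k) (0 : Fin 2) (X (1 : Fin 2)) = 0 :=
        pderiv_X_of_ne (by decide)
      intro i
      fin_cases i
      · simp [hδu, Derivation.add_apply, Derivation.smul_apply, pderiv_X_self, h01,
          smul_eq_mul]
      · simp [hδv, Derivation.add_apply, Derivation.smul_apply, pderiv_X_self, h10,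
          smul_eq_mul]
    have hDg : δ g = pderiv 0 g + pderiv 1 g + X 0 * X 1 * pderiv 1 g := by
      rw [hδ_eq]
      simp only [Derivation.add_apply, Derivation.smul_apply, smul_eq_mul, add_mul, one_mul]
      ring
    -- coefficients of g
    set c : ℕ → ℕ → k := fun a b => coeff (mo a b) g with hc
    -- coefficients of δ g at monomials with positive u-exponent vanish
    have hf0 : ∀ a b : ℕ, coeff (mo (a + 1) b) (δ g) = 0 := by
      intro a b
      rw [← hq]
      exact coeff_aeval_X1 q _ (by rw [mo_apply0]; omega)
    -- expand coefficients of δ g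
    have hcoeff : ∀ a b : ℕ,
        coeff (mo a b) (δ g) =
          (a + 1 : ℕ) * c (a + 1) b + (b + 1 : ℕ) * c a (b + 1) +
            coeff (mo a b) (X 0 * X 1 * pderiv 1 g) := by
      intro a b
      rw [hDg]
      simp only [coeff_add]
      rw [coeff_pderiv_aux, coeff_pderiv_aux, mo_apply0, mo_apply1,
        mo_add_single0, mo_add_single1]
    -- the key recurrence
    have hE : ∀ i j : ℕ,
        (i + 2 : ℕ) * c (i + 2) (j + 1) + (j + 2 : ℕ) * c (i + 1) (j + 2) +
          (j + 1 : ℕ) * c i (j + 1) = 0 := by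
      intro i j
      have h1 := hf0 i (j + 1)
      rw [hcoeff (i + 1) (j + 1), coeff_uv_mul, coeff_pderiv_aux, mo_apply1,
        mo_add_single1] at h1
      exact h1
    -- downward induction: c i (j+1) = 0 for all i, j
    have key : ∀ N i, g.totalDegree < i + N → ∀ j, c i (j + 1) = 0 := by
      intro N
      induction N with
      | zero =>
        intro i hi j
        exact coeff_zero_of_big g _ (by rwa [mo_apply0, Nat.add_zero] at *)
      | succ N ih =>
        intro i hi j
        have h1 : c (i + 2) (j + 1) = 0 := ih (i + 2) (by omega) j
        have h2 : c (i + 1) (j + 2) = 0 := ih (i + 1) (by omega) (j + 1)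
        have h3 := hE i j
        rw [h1, h2, mul_zero, mul_zero, zero_add, zero_add] at h3
        have : ((j : k) + 1) ≠ 0 := by
          have : ((j + 1 : ℕ) : k) ≠ 0 := Nat.cast_ne_zero.2 (by omega)
          push_cast at this; exact this
        have h4 : ((j + 1 : ℕ) : k) ≠ 0 := Nat.cast_ne_zero.2 (by omega)
        exact (mul_eq_zero.1 h3).resolve_left h4
    have P : ∀ i j, c i (j + 1) = 0 := fun i j =>
      key (g.totalDegree + 1) i (by omega) j
    -- conclude: δ g is a constant
    refine ⟨coeff 0 (δ g), ?_⟩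
    apply MvPolynomial.ext
    intro d
    rw [coeff_C]
    rcases Nat.eq_zero_or_pos (d 0) with h0 | h0
    · rcases Nat.eq_zero_or_pos (d 1) with h1 | h1
      · have hd : d = 0 := by
          ext x; fin_cases x <;> simp [h0, h1]
        rw [if_pos hd.symm, hd]
      · obtain ⟨b, hb⟩ : ∃ b, d 1 = b + 1 := ⟨d 1 - 1, by omega⟩
        have hdm : d = mo 0 (b + 1) := by rw [← h0, ← hb]; exact eq_mo d
        have hz : coeff (mo 0 (b + 1)) (δ g) = 0 := by
          rw [hcoeff 0 (b + 1), coeff_uv_mul_zero, P 1 b, P 0 (b + 1)]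
          simp
        rw [hdm, hz, if_neg]
        intro hcon
        have := congrArg (fun e => e 1) hcon
        simp [mo_apply1] at this
    · obtain ⟨a, ha⟩ : ∃ a, d 0 = a + 1 := ⟨d 0 - 1, by omega⟩
      have hdm : d = mo (a + 1) (d 1) := by rw [← ha]; exact eq_mo d
      rw [hdm, hf0 a (d 1), if_neg]
      intro hcon
      have := congrArg (fun e => e 0) hcon
      simp [mo_apply0] at this
  · rintro ⟨cst, rfl⟩
    refine ⟨⟨C cst * X 0, ?_⟩, Polynomial.C cst, by simp⟩
    rw [Derivation.leibniz]
    simp [hδu]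
end

section
/- The derivation δ = ∂/∂u + (1+uv) ∂/∂v of k[u,v] is a simple derivation. -/
section Aux

open Polynomial

variable {k : Type} [Field k] [CharZero k]

/-- The inner equivalence `k[x₀] ≃ k[X]`. -/
noncomputable def stmt8e2 (k : Type) [Field k] : MvPolynomial (Fin 1) k ≃ₐ[k] Polynomial k :=
  (MvPolynomial.finSuccEquiv k 0).trans
    (Polynomial.mapAlgEquiv (MvPolynomial.isEmptyAlgEquiv k (Fin 0)))

/-- The equivalence `k[x₀,x₁] ≃ (k[u])[v]` sending `x₁` to the outer variable. -/
noncomputable def stmt8eqv (k : Type) [Field k] :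
    MvPolynomial (Fin 2) k ≃ₐ[k] Polynomial (Polynomial k) :=
  ((MvPolynomial.renameEquiv k (Equiv.swap (0 : Fin 2) 1)).trans
    (MvPolynomial.finSuccEquiv k 1)).trans (Polynomial.mapAlgEquiv (stmt8e2 k))

theorem stmt8eqv_X1 : (stmt8eqv k) (MvPolynomial.X 1) = Polynomial.X := by
  simp [stmt8eqv, stmt8e2, MvPolynomial.finSuccEquiv_X_zero, Equiv.swap_apply_right]

theorem stmt8e2_X0 : (stmt8e2 k) (MvPolynomial.X 0) = Polynomial.X := by
  simp [stmt8e2, MvPolynomial.finSuccEquiv_X_zero]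

theorem stmt8eqv_X0 : (stmt8eqv k) (MvPolynomial.X 0) = Polynomial.C Polynomial.X := by
  have h1 : ((Equiv.swap (0 : Fin 2) 1) 0) = 1 := Equiv.swap_apply_left 0 1
  simp only [stmt8eqv, AlgEquiv.trans_apply, MvPolynomial.renameEquiv_apply, MvPolynomial.rename_X, h1]
  rw [show (MvPolynomial.X (1:Fin 2) : MvPolynomial (Fin 2) k) = MvPolynomial.X (Fin.succ 0) from rfl,
    MvPolynomial.finSuccEquiv_X_succ]
  simp [stmt8e2_X0]

variable {B A : Type} [CommRing B] [CommRing A] [Algebra k B] [Algebra k A]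

/-- Transport a derivation along an algebra equivalence. -/
noncomputable def Derivation.transport (e : B ≃ₐ[k] A) (δ : Derivation k B B) :
    Derivation k A A where
  toLinearMap := e.toLinearMap ∘ₗ δ.toLinearMap ∘ₗ e.symm.toLinearMap
  map_one_eq_zero' := by simp
  leibniz' a b := by
    simp only [LinearMap.coe_comp, Function.comp_apply, AlgEquiv.toLinearMap_apply,
      Derivation.coeFn_coe, map_mul, Derivation.leibniz, map_add, smul_eq_mul]
    simp

theorem Derivation.transport_apply (e : B ≃ₐ[k] A) (δ : Derivation k B B) (a : A) :
    Derivation.transport e δ a = e (δ (e.symm a)) := rfl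

end Aux

section Core

open Polynomial

variable {k : Type} [Field k] [CharZero k]

local notation "S" => Polynomial k
local notation "A" => Polynomial (Polynomial k)

theorem stmt8_algebraMap_eq_CC (c : k) : algebraMap k A c = C (C c) := rfl

theorem stmt8_dC (d : Derivation k A A) (hu : d (C (X : S)) = 1)
    (s : S) : d (C s) = C (derivative s) := by
  induction s using Polynomial.induction_on' with
  | add p q hp hq => simp [hp, hq]
  | monomial m c =>
    rw [← C_mul_X_pow_eq_monomial, C_mul, C_pow]
    rw [← stmt8_algebraMap_eq_CC, Derivation.leibniz, Derivation.map_algebraMap,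
      Derivation.leibniz_pow, hu, derivative_C_mul, derivative_X_pow]
    simp only [smul_zero, add_zero, smul_eq_mul, mul_one, smul_smul, C_mul, C_pow,
      map_natCast, stmt8_algebraMap_eq_CC]
    ring

theorem stmt8_d_monomial (d : Derivation k A A) (hu : d (C (X : S)) = 1)
    (hX : d X = 1 + C (X : S) * X) (i : ℕ) (a : S) :
    d (monomial i a) = C (derivative a) * X ^ i + i • (C a * X ^ (i - 1))
      + i • (C ((X : S) * a) * X ^ i) := by
  rw [← C_mul_X_pow_eq_monomial, Derivation.leibniz, stmt8_dC d hu,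
    Derivation.leibniz_pow, hX]
  cases i with
  | zero => simp
  | succ m =>
    simp only [Nat.add_sub_cancel, smul_eq_mul, nsmul_eq_mul, smul_smul, C_mul]
    push_cast
    ring

theorem stmt8_coeff_d (d : Derivation k A A) (hu : d (C (X : S)) = 1)
    (hX : d X = 1 + C (X : S) * X) (f : A) (j : ℕ) :
    (d f).coeff j = derivative (f.coeff j) + j • ((X : S) * f.coeff j)
      + (j + 1) • f.coeff (j + 1) := by
  induction f using Polynomial.induction_on' with
  | add p q hp hq =>
    simp only [map_add, coeff_add, hp, hq, derivative_add, mul_add, smul_add]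
    ring
  | monomial i a =>
    rw [stmt8_d_monomial d hu hX]
    simp only [coeff_add, coeff_smul, coeff_C_mul, coeff_X_pow, coeff_monomial,
      mul_ite, mul_zero, mul_one, smul_ite, smul_zero]
    by_cases h1 : i = j
    · subst h1
      by_cases h0 : i = 0
      · subst h0; simp
      · have h2 : ¬ i = i - 1 := by omega
        have h3 : ¬ i = i + 1 := by omega
        simp [h2, h3]
    · by_cases h4 : i = j + 1
      · subst h4
        simp [h1, Ne.symm h1, Nat.add_sub_cancel]
      · have h5 : ¬ j = i - 1 ∨ i = 0 := by omega
        rcases h5 with h5 | rfl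
        · simp [h1, Ne.symm h1, h4, h5]
        · simp [h1, Ne.symm h1, h4]

/-- Simplicity of `d/dX` on `k[X]` in characteristic zero. -/
theorem stmt8_polySimple (J : Ideal S) (hJ : ∀ a ∈ J, derivative a ∈ J)
    (hne : J ≠ ⊥) : J = ⊤ := by
  classical
  obtain ⟨a₀, ha₀J, ha₀⟩ := Submodule.ne_bot_iff J |>.mp hne
  have hex : ∃ m : ℕ, ∃ a, a ∈ J ∧ a ≠ 0 ∧ a.natDegree = m :=
    ⟨a₀.natDegree, a₀, ha₀J, ha₀, rfl⟩
  obtain ⟨a, haJ, ha, hadeg⟩ := Nat.find_spec hex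
  have hmin : ∀ b, b ∈ J → b ≠ 0 → Nat.find hex ≤ b.natDegree := fun b hbJ hb =>
    Nat.find_min' hex ⟨b, hbJ, hb, rfl⟩
  have hd0 : a.natDegree = 0 := by
    by_contra hdeg
    have h1 : derivative a ∈ J := hJ a haJ
    have h2 : derivative a ≠ 0 := by
      intro h
      exact hdeg (natDegree_eq_zero_of_derivative_eq_zero h)
    have h3 := hmin _ h1 h2
    have h4 := natDegree_derivative_lt hdeg
    omega
  have : a = C (a.coeff 0) := eq_C_of_natDegree_le_zero (le_of_eq hd0)
  have hc : a.coeff 0 ≠ 0 := by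
    intro h; apply ha; rw [this, h, map_zero]
  refine Ideal.eq_top_of_isUnit_mem J haJ ?_
  rw [this]
  exact isUnit_C.mpr (isUnit_iff_ne_zero.mpr hc)

/-- The main Polynomial-side theorem. -/
theorem stmt8_key (d : Derivation k A A) (hu : d (C (X : S)) = 1)
    (hX : d X = 1 + C (X : S) * X) (I : Ideal A) (hI : ∀ f ∈ I, d f ∈ I)
    (hne : I ≠ ⊥) : I = ⊤ := by
  classical
  obtain ⟨f₀, hf₀I, hf₀⟩ := Submodule.ne_bot_iff I |>.mp hne
  have hex : ∃ m : ℕ, ∃ f, f ∈ I ∧ f ≠ 0 ∧ f.natDegree = m :=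
    ⟨f₀.natDegree, f₀, hf₀I, hf₀, rfl⟩
  set n := Nat.find hex with hn
  obtain ⟨f₁, hf₁I, hf₁ne, hf₁deg⟩ := Nat.find_spec hex
  have hmin : ∀ g, g ∈ I → g ≠ 0 → n ≤ g.natDegree := fun g hgJ hg =>
    Nat.find_min' hex ⟨g, hgJ, hg, rfl⟩
  -- the key construction: kill the `n • u •` part of the derivative
  have hgmem : ∀ f ∈ I, (d f - C (n • (X : S)) * f) ∈ I := fun f hfI =>
    Ideal.sub_mem I (hI f hfI) (Ideal.mul_mem_left I _ hfI)
  have hgdeg : ∀ f : S[X], f.natDegree ≤ n → (d f - C (n • (X : S)) * f).natDegree ≤ n := by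
    intro f hfdeg
    rw [natDegree_le_iff_coeff_eq_zero]
    intro m hm
    rw [coeff_sub, stmt8_coeff_d d hu hX, coeff_C_mul]
    have e1 : f.coeff m = 0 := coeff_eq_zero_of_natDegree_lt (lt_of_le_of_lt hfdeg hm)
    have e2 : f.coeff (m + 1) = 0 :=
      coeff_eq_zero_of_natDegree_lt (lt_of_le_of_lt hfdeg (by omega))
    rw [e1, e2]
    simp
  have hgcoeff : ∀ f : S[X], f.natDegree ≤ n →
      (d f - C (n • (X : S)) * f).coeff n = derivative (f.coeff n) := by
    intro f hfdeg
    rw [coeff_sub, stmt8_coeff_d d hu hX, coeff_C_mul]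
    have e2 : f.coeff (n + 1) = 0 :=
      coeff_eq_zero_of_natDegree_lt (lt_of_le_of_lt hfdeg (by omega))
    rw [e2, smul_mul_assoc]
    simp
  -- the ideal of n-th coefficients
  let J : Ideal S :=
    { carrier := {a | ∃ f ∈ I, f.natDegree ≤ n ∧ f.coeff n = a}
      add_mem' := by
        rintro x y ⟨f, hf, hdf, rfl⟩ ⟨g, hg, hdg, rfl⟩
        exact ⟨f + g, Ideal.add_mem I hf hg,
          le_trans (natDegree_add_le f g) (max_le hdf hdg), coeff_add f g n⟩
      zero_mem' := ⟨0, Ideal.zero_mem I, by simp, by simp⟩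
      smul_mem' := by
        rintro s x ⟨f, hf, hdf, rfl⟩
        exact ⟨C s * f, Ideal.mul_mem_left I _ hf,
          le_trans (natDegree_C_mul_le s f) hdf, coeff_C_mul f⟩ }
  have hJmem : ∀ a : S, a ∈ J ↔ ∃ f ∈ I, f.natDegree ≤ n ∧ f.coeff n = a := fun _ => Iff.rfl
  have hJder : ∀ a ∈ J, derivative a ∈ J := by
    intro a haJ
    obtain ⟨f, hfI, hfdeg, rfl⟩ := (hJmem a).mp haJ
    exact (hJmem _).mpr ⟨d f - C (n • (X : S)) * f, hgmem f hfI, hgdeg f hfdeg,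
      hgcoeff f hfdeg⟩
  have hJne : J ≠ ⊥ := by
    rw [Submodule.ne_bot_iff]
    rw [← hn] at hf₁deg
    refine ⟨f₁.coeff n, (hJmem _).mpr ⟨f₁, hf₁I, le_of_eq hf₁deg, rfl⟩, ?_⟩
    rw [← hf₁deg]
    exact fun h => hf₁ne (leadingCoeff_eq_zero.mp h)
  have hJtop := stmt8_polySimple J hJder hJne
  have h1J : (1 : S) ∈ J := hJtop ▸ Submodule.mem_top
  obtain ⟨f, hfI, hfdeg, hfc⟩ := (hJmem 1).mp h1J
  by_cases hn0 : n = 0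
  · -- f = 1, so I = ⊤
    rw [Ideal.eq_top_iff_one]
    rw [hn0] at hfdeg hfc
    have h1 : f = C (f.coeff 0) := eq_C_of_natDegree_le_zero hfdeg
    rw [h1, hfc, map_one] at hfI
    exact hfI
  · exfalso
    -- the monic-of-minimal-degree contradiction
    set g : S[X] := d f - C (n • (X : S)) * f with hgdef
    have hgc : g.coeff n = 0 := by
      rw [hgdef, hgcoeff f hfdeg, hfc, derivative_one]
    have hg0 : g = 0 := by
      by_contra hgne
      have h1 := hmin g (hgmem f hfI) hgne
      have h2 : g.natDegree = n := le_antisymm (hgdeg f hfdeg) h1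
      refine hgne (leadingCoeff_eq_zero.mp ?_)
      rw [leadingCoeff, h2]
      exact hgc
    -- compute the coefficient of g at n - 1
    have hcoeff : g.coeff (n - 1) = 0 := by rw [hg0]; simp
    have hsucc : n - 1 + 1 = n := by omega
    set a : S := f.coeff (n - 1) with ha
    have hkey : derivative a + (n : S) = (X : S) * a := by
      have hc := hcoeff
      rw [hgdef, coeff_sub, stmt8_coeff_d d hu hX, coeff_C_mul, hsucc, hfc] at hc
      have hns : (n • ((X : S) * a)) = (n - 1) • ((X : S) * a) + (X : S) * a := by
        rw [← succ_nsmul, hsucc]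
      rw [smul_mul_assoc, hns] at hc
      have h3 : derivative a + n • (1 : S) = (X : S) * a := by linear_combination hc
      rw [nsmul_eq_mul, mul_one] at h3
      exact h3
    by_cases ha0 : a = 0
    · rw [ha0, derivative_zero, zero_add, mul_zero] at hkey
      exact hn0 (Nat.cast_eq_zero.mp hkey)
    · have hdeg1 : ((X : S) * a).natDegree = 1 + a.natDegree := by
        rw [natDegree_mul X_ne_zero ha0, natDegree_X]
      have hdeg2 : (derivative a + (n : S)).natDegree ≤ a.natDegree := by
        refine le_trans (natDegree_add_le _ _) (max_le ?_ ?_)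
        · exact le_trans (natDegree_derivative_le a) (Nat.sub_le _ _)
        · rw [natDegree_natCast]; omega
      rw [hkey, hdeg1] at hdeg2
      omega

end Core


open MvPolynomial

/-- the derivation `δ = ∂/∂u + (1 + uv) ∂/∂v` of `k[u,v]`
(`u = X 0`, `v = X 1`) is simple. -/
theorem stmt8 {k : Type} [Field k] [CharZero k] [IsAlgClosed k]
    (δ : Derivation k (MvPolynomial (Fin 2) k) (MvPolynomial (Fin 2) k))
    (hδu : δ (X 0) = 1)
    (hδv : δ (X 1) = 1 + X 0 * X 1) :
    ∀ I : Ideal (MvPolynomial (Fin 2) k), (∀ f ∈ I, δ f ∈ I) → I = ⊥ ∨ I = ⊤ := by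
  intro I hstab
  by_cases hbot : I = ⊥
  · exact Or.inl hbot
  right
  set e := stmt8eqv k with he
  set d := Derivation.transport e δ with hd
  set J : Ideal (Polynomial (Polynomial k)) := I.comap (e.symm : _ →+* _) with hJ
  have hmem : ∀ a, a ∈ J ↔ e.symm a ∈ I := fun _ => Iff.rfl
  have hsymm0 : e.symm (Polynomial.C Polynomial.X) = X 0 := by
    rw [← stmt8eqv_X0, AlgEquiv.symm_apply_apply]
  have hsymm1 : e.symm (Polynomial.X) = X 1 := by
    rw [← stmt8eqv_X1, AlgEquiv.symm_apply_apply]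
  have hu : d (Polynomial.C Polynomial.X) = 1 := by
    rw [Derivation.transport_apply, hsymm0, hδu, map_one]
  have hX : d Polynomial.X = 1 + Polynomial.C Polynomial.X * Polynomial.X := by
    rw [Derivation.transport_apply, hsymm1, hδv, map_add, map_one, map_mul,
      stmt8eqv_X0, stmt8eqv_X1]
  have hstab' : ∀ a ∈ J, d a ∈ J := by
    intro a haJ
    rw [hmem] at haJ ⊢
    rw [Derivation.transport_apply, AlgEquiv.symm_apply_apply]
    exact hstab _ haJ
  have hJne : J ≠ ⊥ := by
    obtain ⟨f, hfI, hf⟩ := Submodule.ne_bot_iff I |>.mp hbot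
    rw [Submodule.ne_bot_iff]
    refine ⟨e f, (hmem _).mpr (by rw [AlgEquiv.symm_apply_apply]; exact hfI), ?_⟩
    intro h
    exact hf (by simpa using congrArg e.symm h)
  have hJtop := stmt8_key d hu hX J hstab' hJne
  rw [Ideal.eq_top_iff_one]
  have : (1 : Polynomial (Polynomial k)) ∈ J := hJtop ▸ Submodule.mem_top
  rw [hmem, map_one] at this
  exact this
end

section
/- Let δ be a simple derivation of k[u,v] and I = {a_1,...,a_n} ⊂ k[u,v] a linearly independent set whose k-linear span meets the image of δ only in 0. Then the derivation D_I of k[u,v,x_1,...,x_n] extending δ with D_I(x_j) = a_j for all j is simple. -/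
open MvPolynomial

noncomputable def dcw {k A : Type*} [CommRing k] [CommRing A] [Algebra k A] {n : ℕ}
    (δ : Derivation k A A) (f : MvPolynomial (Fin n) A) : MvPolynomial (Fin n) A :=
  AddMonoidAlgebra.map (δ : A →+ A) f

lemma coeff_dcw {k A : Type*} [CommRing k] [CommRing A] [Algebra k A] {n : ℕ}
    (δ : Derivation k A A) (f : MvPolynomial (Fin n) A) (m : Fin n →₀ ℕ) :
    coeff m (dcw δ f) = δ (coeff m f) :=
  coeff_addMonoidAlgebraMap _ f m

lemma dcw_add {k A : Type*} [CommRing k] [CommRing A] [Algebra k A] {n : ℕ}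
    (δ : Derivation k A A) (f g : MvPolynomial (Fin n) A) :
    dcw δ (f + g) = dcw δ f + dcw δ g := by
  apply MvPolynomial.ext; intro m
  simp [coeff_dcw, coeff_add]

lemma dcw_C {k A : Type*} [CommRing k] [CommRing A] [Algebra k A] {n : ℕ}
    (δ : Derivation k A A) (r : A) :
    dcw (n := n) δ (C r) = C (δ r) := by
  apply MvPolynomial.ext; intro m
  rw [coeff_dcw, coeff_C, coeff_C]
  split_ifs <;> simp

lemma dcw_mul_X {k A : Type*} [CommRing k] [CommRing A] [Algebra k A] {n : ℕ}
    (δ : Derivation k A A) (f : MvPolynomial (Fin n) A) (i : Fin n) :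
    dcw δ (f * X i) = dcw δ f * X i := by
  apply MvPolynomial.ext; intro m
  rw [coeff_dcw, coeff_mul_X', coeff_mul_X', coeff_dcw]
  split_ifs <;> simp

lemma coeff_pderiv {A : Type*} [CommRing A] {n : ℕ}
    (j : Fin n) (m : Fin n →₀ ℕ) (f : MvPolynomial (Fin n) A) :
    coeff m (pderiv j f) = (m j + 1 : ℕ) * coeff (m + Finsupp.single j 1) f := by
  induction f using MvPolynomial.induction_on' with
  | monomial s r =>
    rw [pderiv_monomial, coeff_monomial, coeff_monomial]
    by_cases hs : s = m + Finsupp.single j 1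
    · subst hs
      have h1 : m + Finsupp.single j 1 - Finsupp.single j 1 = m :=
        add_tsub_cancel_right m (Finsupp.single j 1)
      have h2 : (m + Finsupp.single j 1 : Fin n →₀ ℕ) j = m j + 1 := by
        rw [Finsupp.add_apply, Finsupp.single_eq_same]
      rw [if_pos h1, h2, if_pos rfl]
      push_cast
      ring
    · rw [if_neg hs, mul_zero]
      by_cases h2 : s - Finsupp.single j 1 = m
      · by_cases h3 : s j = 0
        · rw [if_pos h2, h3]; push_cast; ring
        · exfalso
          apply hs
          rw [← h2]
          rw [tsub_add_cancel_of_le]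
          rw [Finsupp.single_le_iff]
          exact Nat.one_le_iff_ne_zero.mpr h3
      · rw [if_neg h2]
  | add p q hp hq =>
    simp only [map_add, coeff_add, hp, hq]
    ring

lemma D_eq {k A : Type*} [CommRing k] [CommRing A] [Algebra k A] {n : ℕ}
    (δ : Derivation k A A) (a : Fin n → A)
    (D : Derivation k (MvPolynomial (Fin n) A) (MvPolynomial (Fin n) A))
    (hDC : ∀ p : A, D (C p) = C (δ p))
    (hDX : ∀ j : Fin n, D (X j) = C (a j))
    (f : MvPolynomial (Fin n) A) :
    D f = dcw δ f + ∑ j, C (a j) * pderiv j f := by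
  induction f using MvPolynomial.induction_on with
  | C r => simp [hDC, dcw_C, pderiv_C]
  | add p q hp hq =>
    rw [map_add, hp, hq, dcw_add]
    simp only [map_add, mul_add, Finset.sum_add_distrib]
    ring
  | mul_X p i hp =>
    rw [Derivation.leibniz, hp, hDX, dcw_mul_X]
    have : ∀ j : Fin n, C (a j) * pderiv j (p * X i)
        = C (a j) * pderiv j p * X i + (if j = i then C (a j) * p else 0) := by
      intro j
      rw [Derivation.leibniz, pderiv_X]
      by_cases hj : j = i
      · subst hj; simp [smul_eq_mul]; ring
      · simp [hj, Pi.single_eq_of_ne hj, smul_eq_mul]; ring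
    rw [Finset.sum_congr rfl fun j _ => this j, Finset.sum_add_distrib,
      Finset.sum_ite_eq' Finset.univ i fun j => C (a j) * p]
    have hsum : (∑ j, C (a j) * pderiv j p * X i)
        = (∑ j, C (a j) * pderiv j p) * X i := by rw [Finset.sum_mul]
    rw [hsum]
    simp only [smul_eq_mul, Finset.mem_univ, if_pos]
    ring

lemma coeff_D {k A : Type*} [CommRing k] [CommRing A] [Algebra k A] {n : ℕ}
    (δ : Derivation k A A) (a : Fin n → A)
    (D : Derivation k (MvPolynomial (Fin n) A) (MvPolynomial (Fin n) A))
    (hDC : ∀ p : A, D (C p) = C (δ p))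
    (hDX : ∀ j : Fin n, D (X j) = C (a j))
    (f : MvPolynomial (Fin n) A) (m : Fin n →₀ ℕ) :
    coeff m (D f)
      = δ (coeff m f) + ∑ j, a j * ((m j + 1 : ℕ) * coeff (m + Finsupp.single j 1) f) := by
  rw [D_eq δ a D hDC hDX f, coeff_add, coeff_dcw, coeff_sum]
  congr 1
  exact Finset.sum_congr rfl fun j _ => by rw [coeff_C_mul, _root_.coeff_pderiv]

def degM {n : ℕ} (m : Fin n →₀ ℕ) : ℕ := ∑ j, m j

lemma degM_add_single {n : ℕ} (m : Fin n →₀ ℕ) (j : Fin n) :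
    degM (m + Finsupp.single j 1) = degM m + 1 := by
  unfold degM
  have h1 : ∀ i : Fin n, (m + Finsupp.single j 1 : Fin n →₀ ℕ) i
      = m i + (if j = i then 1 else 0) := by
    intro i
    rw [Finsupp.add_apply, Finsupp.single_apply]
  rw [Finset.sum_congr rfl fun i _ => h1 i, Finset.sum_add_distrib,
    Finset.sum_ite_eq Finset.univ j fun _ => 1, if_pos (Finset.mem_univ j)]

lemma degM_zero {n : ℕ} : degM (0 : Fin n →₀ ℕ) = 0 := by
  unfold degM; simp

lemma degM_eq_zero {n : ℕ} {m : Fin n →₀ ℕ} (h : degM m = 0) : m = 0 := by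
  unfold degM at h
  rw [Finset.sum_eq_zero_iff] at h
  ext j
  exact h j (Finset.mem_univ j)

def degLE {R : Type*} [CommRing R] {n : ℕ} (f : MvPolynomial (Fin n) R) (e : ℕ) : Prop :=
  ∀ m, coeff m f ≠ 0 → degM m ≤ e

def topsupp {R : Type*} [CommRing R] {n : ℕ} (f : MvPolynomial (Fin n) R) (d : ℕ) :
    Finset (Fin n →₀ ℕ) := f.support.filter (fun m => degM m = d)

lemma mem_topsupp {R : Type*} [CommRing R] {n : ℕ} {f : MvPolynomial (Fin n) R} {d : ℕ}
    {m : Fin n →₀ ℕ} : m ∈ topsupp f d ↔ coeff m f ≠ 0 ∧ degM m = d := by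
  rw [topsupp, Finset.mem_filter, mem_support_iff]

def Jideal {k : Type} [CommRing k] {n : ℕ}
    (I : Ideal (MvPolynomial (Fin n) (MvPolynomial (Fin 2) k))) (d : ℕ)
    (T : Finset (Fin n →₀ ℕ)) (α : Fin n →₀ ℕ) : Ideal (MvPolynomial (Fin 2) k) where
  carrier := {r | ∃ f, f ∈ I ∧ degLE f d ∧ topsupp f d ⊆ T ∧ coeff α f = r}
  zero_mem' := ⟨0, I.zero_mem, fun m hm => (hm (coeff_zero m)).elim, by
    intro m hm
    rw [mem_topsupp] at hm
    exact (hm.1 (coeff_zero m)).elim, coeff_zero α⟩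
  add_mem' := by
    rintro x y ⟨f, hfI, hfd, hfT, rfl⟩ ⟨g, hgI, hgd, hgT, rfl⟩
    refine ⟨f + g, I.add_mem hfI hgI, ?_, ?_, coeff_add α f g⟩
    · intro m hm
      rw [coeff_add] at hm
      by_cases h1 : coeff m f = 0
      · exact hgd m (by intro h2; apply hm; rw [h1, h2, add_zero])
      · exact hfd m h1
    · intro m hm
      rw [mem_topsupp] at hm
      obtain ⟨hm1, hm2⟩ := hm
      rw [coeff_add] at hm1
      by_cases h1 : coeff m f = 0
      · exact hgT (mem_topsupp.mpr ⟨by intro h2; apply hm1; rw [h1, h2, add_zero], hm2⟩)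
      · exact hfT (mem_topsupp.mpr ⟨h1, hm2⟩)
  smul_mem' := by
    rintro r x ⟨f, hfI, hfd, hfT, rfl⟩
    refine ⟨C r * f, I.mul_mem_left _ hfI, ?_, ?_, by rw [coeff_C_mul, smul_eq_mul]⟩
    · intro m hm
      rw [coeff_C_mul] at hm
      exact hfd m (fun h => hm (by rw [h, mul_zero]))
    · intro m hm
      rw [mem_topsupp, coeff_C_mul] at hm
      exact hfT (mem_topsupp.mpr ⟨fun h => hm.1 (by rw [h, mul_zero]), hm.2⟩)

lemma mem_Jideal {k : Type} [CommRing k] {n : ℕ}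
    {I : Ideal (MvPolynomial (Fin n) (MvPolynomial (Fin 2) k))} {d : ℕ}
    {T : Finset (Fin n →₀ ℕ)} {α : Fin n →₀ ℕ} {r : MvPolynomial (Fin 2) k} :
    r ∈ Jideal I d T α ↔ ∃ f, f ∈ I ∧ degLE f d ∧ topsupp f d ⊆ T ∧ coeff α f = r :=
  Iff.rfl

lemma delta_const {k : Type} [Field k]
    (δ : Derivation k (MvPolynomial (Fin 2) k) (MvPolynomial (Fin 2) k))
    (hδ : ∀ I : Ideal (MvPolynomial (Fin 2) k), (∀ x ∈ I, δ x ∈ I) → I = ⊥ ∨ I = ⊤)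
    (r : MvPolynomial (Fin 2) k) (h : δ r = 0) : ∃ c : k, r = C c := by
  set c := eval (fun _ => (0 : k)) r with hc
  refine ⟨c, ?_⟩
  set g := r - C c with hg
  have hδg : δ g = 0 := by
    rw [hg, map_sub, h, ← MvPolynomial.algebraMap_eq, Derivation.map_algebraMap, sub_zero]
  have hstab : ∀ x ∈ Ideal.span {g}, δ x ∈ Ideal.span {g} := by
    intro x hx
    rw [Ideal.mem_span_singleton] at hx ⊢
    obtain ⟨t, rfl⟩ := hx
    rw [Derivation.leibniz, smul_eq_mul, smul_eq_mul, hδg, mul_zero, add_zero]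
    exact Dvd.intro _ rfl
  rcases hδ _ hstab with hbot | htop
  · have hmem : g ∈ Ideal.span {g} := Ideal.mem_span_singleton_self g
    rw [hbot, Ideal.mem_bot] at hmem
    rw [← sub_eq_zero]
    exact hmem
  · exfalso
    have h1 : (1 : MvPolynomial (Fin 2) k) ∈ Ideal.span {g} := by
      rw [htop]; trivial
    rw [Ideal.mem_span_singleton] at h1
    obtain ⟨t, ht⟩ := h1
    have := congrArg (eval (fun _ => (0 : k))) ht
    rw [map_one, map_mul, hg, map_sub, eval_C, ← hc, sub_self, zero_mul] at this
    exact one_ne_zero this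

theorem stmt9 {k : Type} [Field k] [CharZero k] [IsAlgClosed k] {n : ℕ}
    (δ : Derivation k (MvPolynomial (Fin 2) k) (MvPolynomial (Fin 2) k))
    (hδ : ∀ I : Ideal (MvPolynomial (Fin 2) k), (∀ x ∈ I, δ x ∈ I) → I = ⊥ ∨ I = ⊤)
    (a : Fin n → MvPolynomial (Fin 2) k)
    (hLI : LinearIndependent k a)
    (hspan : ∀ v ∈ Submodule.span k (Set.range a), (∃ g, δ g = v) → v = 0)
    (D : Derivation k (MvPolynomial (Fin n) (MvPolynomial (Fin 2) k))
      (MvPolynomial (Fin n) (MvPolynomial (Fin 2) k)))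
    (hDC : ∀ p : MvPolynomial (Fin 2) k, D (C p) = C (δ p))
    (hDX : ∀ j : Fin n, D (X j) = C (a j)) :
    ∀ I : Ideal (MvPolynomial (Fin n) (MvPolynomial (Fin 2) k)),
      (∀ f ∈ I, D f ∈ I) → I = ⊥ ∨ I = ⊤ := by
  intro I hI
  classical
  by_cases hIbot : I = ⊥
  · exact Or.inl hIbot
  right
  have key : ∀ (f : MvPolynomial (Fin n) (MvPolynomial (Fin 2) k)) m, coeff m (D f)
      = δ (coeff m f) + ∑ j, a j * ((m j + 1 : ℕ) * coeff (m + Finsupp.single j 1) f) :=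
    coeff_D δ a D hDC hDX
  obtain ⟨f₁, hf₁I, hf₁0⟩ := (Submodule.ne_bot_iff I).mp hIbot
  have P1 : ∃ e : ℕ, ∃ f, f ∈ I ∧ f ≠ 0 ∧ degLE f e :=
    ⟨f₁.support.sup degM, f₁, hf₁I, hf₁0, fun m hm => Finset.le_sup (mem_support_iff.mpr hm)⟩
  set d := Nat.find P1 with hd_def
  obtain ⟨f₂, hf₂I, hf₂0, hf₂d⟩ := Nat.find_spec P1
  rw [← hd_def] at hf₂d
  have hdmin : ∀ f ∈ I, ∀ e, e < d → degLE f e → f = 0 := by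
    intro f hf e he hfe
    by_contra h0
    exact Nat.find_min P1 he ⟨f, hf, h0, hfe⟩
  have hDdeg : ∀ f : MvPolynomial (Fin n) (MvPolynomial (Fin 2) k),
      degLE f d → degLE (D f) d := by
    intro f hf m hm
    by_contra hgt
    push_neg at hgt
    apply hm
    rw [key f m]
    have h1 : coeff m f = 0 := by
      by_contra h; exact absurd (hf m h) (by omega)
    have h2 : ∀ j : Fin n, coeff (m + Finsupp.single j 1) f = 0 := by
      intro j; by_contra h
      have := hf _ h
      rw [degM_add_single] at this
      omega
    rw [h1, map_zero, zero_add]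
    exact Finset.sum_eq_zero fun j _ => by rw [h2 j, mul_zero, mul_zero]
  have hDtop : ∀ f : MvPolynomial (Fin n) (MvPolynomial (Fin 2) k), degLE f d →
      ∀ m, degM m = d → coeff m (D f) = δ (coeff m f) := by
    intro f hf m hm
    rw [key f m]
    have h2 : ∀ j : Fin n, coeff (m + Finsupp.single j 1) f = 0 := by
      intro j; by_contra h
      have := hf _ h
      rw [degM_add_single] at this
      omega
    rw [Finset.sum_eq_zero fun j _ => by rw [h2 j, mul_zero, mul_zero], add_zero]
  by_cases hd0 : d = 0
  · -- constant case : I contains a nonzero constant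
    have hf₂C : f₂ = C (coeff 0 f₂) := by
      apply MvPolynomial.ext
      intro m
      rw [coeff_C]
      by_cases hm : (0 : Fin n →₀ ℕ) = m
      · rw [if_pos hm, ← hm]
      · rw [if_neg hm]
        by_contra h
        apply hm
        have := hf₂d m h
        rw [hd0] at this
        exact (degM_eq_zero (Nat.le_zero.mp this)).symm
    have hstab : ∀ x ∈ Ideal.comap (C : MvPolynomial (Fin 2) k →+*
        MvPolynomial (Fin n) (MvPolynomial (Fin 2) k)) I,
        δ x ∈ Ideal.comap (C : MvPolynomial (Fin 2) k →+*
        MvPolynomial (Fin n) (MvPolynomial (Fin 2) k)) I := by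
      intro x hx
      rw [Ideal.mem_comap] at hx ⊢
      have : (C : MvPolynomial (Fin 2) k →+*
          MvPolynomial (Fin n) (MvPolynomial (Fin 2) k)) (δ x) = D (C x) := (hDC x).symm
      rw [this]
      exact hI _ hx
    rcases hδ _ hstab with hbot | htop
    · exfalso
      have hmem : coeff 0 f₂ ∈ Ideal.comap (C : MvPolynomial (Fin 2) k →+*
          MvPolynomial (Fin n) (MvPolynomial (Fin 2) k)) I := by
        rw [Ideal.mem_comap]
        show C (coeff 0 f₂) ∈ I
        rw [← hf₂C]
        exact hf₂I
      rw [hbot, Ideal.mem_bot] at hmem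
      apply hf₂0
      rw [hf₂C, hmem, map_zero]
    · rw [Ideal.eq_top_iff_one] at htop ⊢
      rw [Ideal.mem_comap, map_one] at htop
      exact htop
  · -- case d ≥ 1
    exfalso
    have hd1 : 1 ≤ d := Nat.one_le_iff_ne_zero.mpr hd0
    have htopne : ∀ f ∈ I, f ≠ 0 → degLE f d → (topsupp f d).Nonempty := by
      intro f hf h0 hfd
      rw [Finset.nonempty_iff_ne_empty]
      intro hemp
      apply h0
      apply hdmin f hf (d - 1) (by omega)
      intro m hm
      have h1 : degM m ≤ d := hfd m hm
      have h2 : degM m ≠ d := by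
        intro hdm
        have hmem : m ∈ topsupp f d := mem_topsupp.mpr ⟨hm, hdm⟩
        rw [hemp] at hmem
        exact absurd hmem (Finset.notMem_empty m)
      omega
    have P2 : ∃ c : ℕ, ∃ f, f ∈ I ∧ f ≠ 0 ∧ degLE f d ∧ (topsupp f d).card ≤ c :=
      ⟨(topsupp f₂ d).card, f₂, hf₂I, hf₂0, hf₂d, le_refl _⟩
    set c₀ := Nat.find P2 with hc₀_def
    obtain ⟨f₀, hf₀I, hf₀0, hf₀d, hf₀c⟩ := Nat.find_spec P2
    rw [← hc₀_def] at hf₀c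
    have hcmin : ∀ f ∈ I, f ≠ 0 → degLE f d → c₀ ≤ (topsupp f d).card := by
      intro f hf h0 hfd
      by_contra hlt
      push_neg at hlt
      exact Nat.find_min P2 hlt ⟨f, hf, h0, hfd, le_refl _⟩
    obtain ⟨α, hαT⟩ := htopne f₀ hf₀I hf₀0 hf₀d
    have hαd : degM α = d := (mem_topsupp.mp hαT).2
    set T := topsupp f₀ d with hT_def
    have hstab : ∀ x ∈ Jideal I d T α, δ x ∈ Jideal I d T α := by
      rintro x ⟨f, hfI, hfd, hfT, rfl⟩
      refine ⟨D f, hI f hfI, hDdeg f hfd, ?_, hDtop f hfd α hαd⟩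
      intro m hm
      rw [mem_topsupp] at hm
      obtain ⟨hm1, hm2⟩ := hm
      apply hfT
      rw [mem_topsupp]
      refine ⟨?_, hm2⟩
      intro h0
      apply hm1
      rw [hDtop f hfd m hm2, h0, map_zero]
    rcases hδ (Jideal I d T α) hstab with hbot | htop
    · have hmem : coeff α f₀ ∈ Jideal I d T α :=
        ⟨f₀, hf₀I, hf₀d, by rw [hT_def], rfl⟩
      rw [hbot, Ideal.mem_bot] at hmem
      exact (mem_topsupp.mp hαT).1 hmem
    · have h1J : (1 : MvPolynomial (Fin 2) k) ∈ Jideal I d T α := by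
        rw [htop]; trivial
      obtain ⟨g, hgI, hgd, hgT, hg1⟩ := h1J
      have hg0 : g ≠ 0 := by
        intro h
        rw [h, coeff_zero] at hg1
        exact one_ne_zero hg1.symm
      have hDg : D g = 0 := by
        by_contra h0
        have hc1 : c₀ ≤ (topsupp (D g) d).card := hcmin (D g) (hI g hgI) h0 (hDdeg g hgd)
        have hsub : topsupp (D g) d ⊆ T.erase α := by
          intro m hm
          rw [mem_topsupp] at hm
          obtain ⟨hm1, hm2⟩ := hm
          rw [Finset.mem_erase]
          constructor
          · intro hma
            apply hm1
            rw [hma, hDtop g hgd α hαd, hg1, Derivation.map_one_eq_zero]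
          · apply hgT
            rw [mem_topsupp]
            refine ⟨?_, hm2⟩
            intro h0'
            apply hm1
            rw [hDtop g hgd m hm2, h0', map_zero]
        have hcard : (topsupp (D g) d).card < T.card :=
          lt_of_le_of_lt (Finset.card_le_card hsub) (Finset.card_erase_lt_of_mem hαT)
        omega
      have hconst : ∀ m, degM m = d → ∃ c : k, coeff m g = C c := by
        intro m hm
        apply delta_const δ hδ
        rw [← hDtop g hgd m hm, hDg]
        exact coeff_zero m
      have hzero : ∀ m, degM m = d → coeff m g = 0 := by
        intro m hm
        have hm0 : m ≠ 0 := by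
          intro h
          rw [h, degM_zero] at hm
          omega
        obtain ⟨j, hj⟩ : ∃ j, m j ≠ 0 := by
          by_contra h
          push_neg at h
          exact hm0 (by ext a'; simp [h a'])
        set m' := m - Finsupp.single j 1 with hm'_def
        have hle : Finsupp.single j 1 ≤ m := Finsupp.single_le_iff.mpr
          (Nat.one_le_iff_ne_zero.mpr hj)
        have hm'add : m' + Finsupp.single j 1 = m := tsub_add_cancel_of_le hle
        have hm'd : degM m' + 1 = d := by rw [← hm, ← hm'add, degM_add_single]
        have hcs : ∀ j' : Fin n, ∃ c : k, coeff (m' + Finsupp.single j' 1) g = C c := by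
          intro j'
          apply hconst
          rw [degM_add_single]
          omega
        choose w hw using hcs
        have heq := key g m'
        rw [hDg, coeff_zero] at heq
        have hsum : ∑ j', a j' * ((m' j' + 1 : ℕ) * coeff (m' + Finsupp.single j' 1) g)
            = ∑ j', (((m' j' + 1 : ℕ) : k) * w j') • a j' := by
          refine Finset.sum_congr rfl fun j' _ => ?_
          rw [hw j', MvPolynomial.smul_eq_C_mul, map_mul, map_natCast]
          ring
        have hveq : (∑ j' : Fin n, (((m' j' + 1 : ℕ) : k) * w j') • a j') = 0 := by
          apply hspan
          · exact Submodule.sum_mem _ fun j' _ =>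
              Submodule.smul_mem _ _ (Submodule.subset_span ⟨j', rfl⟩)
          · refine ⟨- coeff m' g, ?_⟩
            rw [map_neg, ← hsum]
            exact (eq_neg_of_add_eq_zero_right heq.symm).symm
        have hli := Fintype.linearIndependent_iff.mp hLI
          (fun j' => ((m' j' + 1 : ℕ) : k) * w j') hveq j
        have hne : ((m' j + 1 : ℕ) : k) ≠ 0 := Nat.cast_ne_zero.mpr (Nat.succ_ne_zero _)
        have hwj : w j = 0 := by
          rcases mul_eq_zero.mp hli with h | h
          · exact absurd h hne
          · exact h
        rw [← hm'add, hw j, hwj, map_zero]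
      exact one_ne_zero (hg1.symm.trans (hzero α hαd))
end

section
/- Let D be a simple derivation of k[x_1,...,x_n] and φ an automorphism of k[x_1,...,x_n] commuting with D (φ∘D = D∘φ). If the induced automorphism of affine n-space has a fixed point and φ ≠ id, then a contradiction follows; i.e., every nontrivial element of Aut(D) acts on A^n without fixed points. -/
open MvPolynomial

/-- if `D` is a simple derivation of `k[x₁,…,xₙ]` and `φ ∈ Aut(D)` fixes a
point of `𝔸ⁿ` (i.e. there is a maximal ideal `m` with `φ(m) = m`), then `φ = id`:
nontrivial elements of `Aut(D)` act without fixed points. -/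
theorem stmt10 {k : Type} [Field k] [CharZero k] [IsAlgClosed k] {n : ℕ}
    (D : Derivation k (MvPolynomial (Fin n) k) (MvPolynomial (Fin n) k))
    (hsimple : ∀ I : Ideal (MvPolynomial (Fin n) k),
      (∀ f ∈ I, D f ∈ I) → I = ⊥ ∨ I = ⊤)
    (φ : MvPolynomial (Fin n) k ≃ₐ[k] MvPolynomial (Fin n) k)
    (hcomm : ∀ f, φ (D f) = D (φ f))
    (m : Ideal (MvPolynomial (Fin n) k)) (hm : m.IsMaximal)
    (hfix : Ideal.map (φ : MvPolynomial (Fin n) k →+* MvPolynomial (Fin n) k) m = m) :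
    φ = AlgEquiv.refl := by
  set J : Ideal (MvPolynomial (Fin n) k) :=
    Ideal.span (Set.range (fun f => φ f - f)) with hJdef
  have hstab : ∀ f ∈ J, D f ∈ J := by
    intro f hf
    induction hf using Submodule.span_induction with
    | mem g hg =>
      obtain ⟨a, rfl⟩ := hg
      have : D (φ a - a) = φ (D a) - D a := by
        rw [map_sub, hcomm]
      rw [this]
      exact Ideal.subset_span ⟨D a, rfl⟩
    | zero => simp
    | add a b _ _ ha hb => simpa using J.add_mem ha hb
    | smul a x hx hDx =>
      have : D (a • x) = a • D x + x • D a := by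
        simp [Derivation.leibniz]
      rw [this]
      exact J.add_mem (J.smul_mem a hDx) (Ideal.mul_mem_right (D a) J hx)
  rcases hsimple J hstab with h | h
  · refine AlgEquiv.ext fun f => ?_
    have hf : φ f - f ∈ J := Ideal.subset_span ⟨f, rfl⟩
    rw [h, Ideal.mem_bot, sub_eq_zero] at hf
    simpa using hf
  · exfalso
    apply hm.ne_top
    rw [eq_top_iff, ← h, hJdef, Ideal.span_le]
    rintro g ⟨f, rfl⟩
    obtain ⟨x, rfl⟩ := isMaximal_iff_eq_vanishingIdeal_singleton.mp hm
    have hfm : f - MvPolynomial.C (eval x f) ∈ vanishingIdeal k {x} := by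
      rw [mem_vanishingIdeal_iff]
      rintro y rfl
      simp
    have hφfm : φ (f - MvPolynomial.C (eval x f)) ∈ vanishingIdeal k {x} := by
      rw [← hfix]
      exact Ideal.mem_map_of_mem _ hfm
    have hC : φ (MvPolynomial.C (eval x f)) = MvPolynomial.C (eval x f) := by
      simpa using φ.commutes (eval x f)
    have : φ f - f = φ (f - MvPolynomial.C (eval x f)) -
        (f - MvPolynomial.C (eval x f)) := by
      rw [map_sub, hC]; ring
    show φ f - f ∈ vanishingIdeal k {x}
    rw [this]
    exact Ideal.sub_mem _ hφfm hfm
end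

section
/- Let D be a simple derivation of k[x_1,...,x_n] and Δ a locally nilpotent derivation commuting with D. Then the ideal of k[x_1,...,x_n] generated by the plinth ideal pl(Δ) = ker(Δ) ∩ Im(Δ) is D-stable; hence if Δ ≠ 0 it equals the whole ring. -/
open MvPolynomial

/-- if `D` is a simple derivation and `Δ` a locally nilpotent derivation
commuting with `D`, then the ideal of `k[x₁,…,xₙ]` generated by the plinth ideal
`pl(Δ) = ker Δ ∩ Im Δ` is `D`-stable; hence, if `Δ ≠ 0`, it is the whole ring. -/
theorem stmt12 {k : Type} [Field k] [CharZero k] [IsAlgClosed k] {n : ℕ}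
    (D Δ : Derivation k (MvPolynomial (Fin n) k) (MvPolynomial (Fin n) k))
    (hsimple : ∀ I : Ideal (MvPolynomial (Fin n) k),
      (∀ f ∈ I, D f ∈ I) → I = ⊥ ∨ I = ⊤)
    (hln : ∀ f, ∃ N, (⇑Δ)^[N] f = 0)
    (hcomm : ∀ f, D (Δ f) = Δ (D f)) :
    (∀ f ∈ Ideal.span {x : MvPolynomial (Fin n) k | Δ x = 0 ∧ ∃ y, Δ y = x},
        D f ∈ Ideal.span {x : MvPolynomial (Fin n) k | Δ x = 0 ∧ ∃ y, Δ y = x}) ∧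
    (Δ ≠ 0 →
      Ideal.span {x : MvPolynomial (Fin n) k | Δ x = 0 ∧ ∃ y, Δ y = x} = ⊤) := by
  set S : Set (MvPolynomial (Fin n) k) := {x | Δ x = 0 ∧ ∃ y, Δ y = x} with hS
  have hstab : ∀ f ∈ Ideal.span S, D f ∈ Ideal.span S := by
    intro f hf
    refine Submodule.span_induction ?_ ?_ ?_ ?_ hf
    · intro x hx
      obtain ⟨hx0, y, hy⟩ := hx
      apply Ideal.subset_span
      refine ⟨?_, D y, ?_⟩
      · rw [← hcomm, hx0, map_zero]
      · rw [← hcomm, hy]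
    · simp
    · intro a b _ _ ha hb
      rw [map_add]; exact Ideal.add_mem _ ha hb
    · intro a x hxmem hx
      rw [smul_eq_mul, Derivation.leibniz, smul_eq_mul, smul_eq_mul]
      refine Ideal.add_mem _ ?_ ?_
      · exact Ideal.mul_mem_left _ _ hx
      · exact Ideal.mul_mem_right _ _ hxmem
  refine ⟨hstab, fun hΔ => ?_⟩
  rcases hsimple _ hstab with hbot | htop
  · exfalso
    -- find nonzero element of S
    obtain ⟨f, hf⟩ : ∃ f, Δ f ≠ 0 := by
      by_contra h
      push_neg at h
      exact hΔ (Derivation.ext fun g => by simp [h g])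
    obtain ⟨N, hN⟩ := hln f
    -- take minimal N
    have key : ∀ M g, Δ g ≠ 0 → (⇑Δ)^[M] g = 0 → False := by
      intro M
      induction M with
      | zero => intro g hg h0; simp at h0; exact hg (by rw [h0]; simp)
      | succ m ih =>
        intro g hg h0
        rw [Function.iterate_succ_apply] at h0
        by_cases hΔg : Δ (Δ g) = 0
        · have : Δ g ∈ Ideal.span S := Ideal.subset_span ⟨hΔg, g, rfl⟩
          rw [hbot] at this
          exact hg (by simpa using this)
        · exact ih (Δ g) hΔg h0
    exact key N f hf hN
  · exact htop
end

section
/- Let D be a derivation of k[x_1,...,x_n] = B[y_1,...,y_s] where B is a subalgebra such that D is simple, and suppose D(p) ∈ B for all p. If {f_1,...,f_ℓ} generates B as a k-algebra and B ≠ k, then the ideal of B generated by D(f_1),...,D(f_ℓ) equals B. -/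
open MvPolynomial

/-- A unit of a multivariate polynomial ring over a field is a constant. -/
lemma mv_unit_mem_bot {k : Type} [Field k] :
    ∀ {n : ℕ} {p : MvPolynomial (Fin n) k}, IsUnit p →
      p ∈ (⊥ : Subalgebra k (MvPolynomial (Fin n) k)) := by
  intro n
  induction n with
  | zero =>
      intro p _
      rw [Algebra.mem_bot]
      exact ⟨p.coeff 0, by rw [MvPolynomial.algebraMap_eq]; exact (eq_C_of_isEmpty p).symm⟩
  | succ m ih =>
      intro p hp
      set e := MvPolynomial.finSuccEquiv k m with he
      have hu : IsUnit (e p) := hp.map e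
      have hdeg : (e p).natDegree = 0 := Polynomial.natDegree_eq_zero_of_isUnit hu
      have hEC : e p = Polynomial.C ((e p).coeff 0) :=
        Polynomial.eq_C_of_natDegree_eq_zero hdeg
      have hu' : IsUnit ((e p).coeff 0) := by
        rw [hEC] at hu
        exact Polynomial.isUnit_C.mp hu
      obtain ⟨c, hc⟩ := Algebra.mem_bot.mp (ih hu')
      rw [MvPolynomial.algebraMap_eq] at hc
      have heq : e p = e (MvPolynomial.C c) := by
      -- `e (C c) = Polynomial.C (C c)` since both equal `algebraMap k _ c`
        have h1 : e (MvPolynomial.C c) = Polynomial.C (MvPolynomial.C c) := by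
          have h2 := e.commutes c
          rw [MvPolynomial.algebraMap_eq] at h2
          rw [h2]
          rfl
        rw [h1, hEC, hc]
      have hpc : p = MvPolynomial.C c := e.injective heq
      rw [Algebra.mem_bot]
      exact ⟨c, by rw [MvPolynomial.algebraMap_eq, hpc]⟩

/-- Key fact: for every `b ∈ B`, the element `D b` (which lies in `B`) belongs to the ideal
of `B` generated by the `D (f i)`. -/
lemma stmt13_key {k : Type} [Field k] {n ℓ : ℕ}
    (D : Derivation k (MvPolynomial (Fin n) k) (MvPolynomial (Fin n) k))
    (B : Subalgebra k (MvPolynomial (Fin n) k))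
    (himg : ∀ p, D p ∈ B)
    (f : Fin ℓ → MvPolynomial (Fin n) k)
    (hgen : Algebra.adjoin k (Set.range f) = B) :
    ∀ b (hb : b ∈ B), (⟨D b, himg b⟩ : B) ∈
      Ideal.span {x : B | ∃ i : Fin ℓ, (x : MvPolynomial (Fin n) k) = D (f i)} := by
  intro b hb
  rw [← hgen] at hb
  induction hb using Algebra.adjoin_induction with
  | mem x hx =>
      obtain ⟨i, rfl⟩ := hx
      exact Ideal.subset_span ⟨i, rfl⟩
  | algebraMap r =>
      have h0 : (⟨D (algebraMap k (MvPolynomial (Fin n) k) r), himg _⟩ : B) = 0 := by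
        ext; simp
      rw [h0]; exact zero_mem _
  | add x y hx hy ihx ihy =>
      have hadd : (⟨D (x + y), himg _⟩ : B) =
          ⟨D x, himg x⟩ + ⟨D y, himg y⟩ := by
        ext; simp
      rw [hadd]; exact add_mem ihx ihy
  | mul x y hx hy ihx ihy =>
      have hx' : x ∈ B := hgen ▸ hx
      have hy' : y ∈ B := hgen ▸ hy
      have hmul : (⟨D (x * y), himg _⟩ : B) =
          (⟨x, hx'⟩ : B) * ⟨D y, himg y⟩ + (⟨y, hy'⟩ : B) * ⟨D x, himg x⟩ := by
        ext
        push_cast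
        simp [Derivation.leibniz, smul_eq_mul]
      rw [hmul]
      exact add_mem (Ideal.mul_mem_left _ _ ihy) (Ideal.mul_mem_left _ _ ihx)

/-- If a derivation kills all generators, it kills the generated subalgebra. -/
lemma stmt13_vanish {k : Type} [Field k] {n ℓ : ℕ}
    (D : Derivation k (MvPolynomial (Fin n) k) (MvPolynomial (Fin n) k))
    (f : Fin ℓ → MvPolynomial (Fin n) k)
    (hDf : ∀ i, D (f i) = 0) :
    ∀ b ∈ Algebra.adjoin k (Set.range f), D b = 0 := by
  intro b hb
  induction hb using Algebra.adjoin_induction with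
  | mem x hx => obtain ⟨i, rfl⟩ := hx; exact hDf i
  | algebraMap r => simp
  | add x y hx hy ihx ihy => simp [ihx, ihy]
  | mul x y hx hy ihx ihy => simp [Derivation.leibniz, ihx, ihy]

set_option maxHeartbeats 1000000 in
set_option synthInstance.maxHeartbeats 400000 in
/-- let `D` be a simple derivation of `k[x₁,…,xₙ] = B[y₁,…,y_s]` with
`Im D ⊆ B`. If `{f₁,…,f_ℓ}` generates `B` as a `k`-algebra and `B ≠ k`, then the ideal
of `B` generated by `D f₁, …, D f_ℓ` equals `B`. -/
theorem stmt13 {k : Type} [Field k] [CharZero k] [IsAlgClosed k] {n s ℓ : ℕ}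
    (D : Derivation k (MvPolynomial (Fin n) k) (MvPolynomial (Fin n) k))
    (B : Subalgebra k (MvPolynomial (Fin n) k))
    (y : Fin s → MvPolynomial (Fin n) k)
    (hyind : AlgebraicIndependent B y)
    (hyadj : Algebra.adjoin B (Set.range y) = ⊤)
    (hsimple : ∀ I : Ideal (MvPolynomial (Fin n) k),
      (∀ f ∈ I, D f ∈ I) → I = ⊥ ∨ I = ⊤)
    (himg : ∀ p, D p ∈ B)
    (f : Fin ℓ → MvPolynomial (Fin n) k) (hf : ∀ i, f i ∈ B)
    (hgen : Algebra.adjoin k (Set.range f) = B)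
    (hB : B ≠ ⊥) :
    Ideal.span {x : B | ∃ i : Fin ℓ, (x : MvPolynomial (Fin n) k) = D (f i)} = ⊤ := by
  classical
  set J : Ideal B :=
    Ideal.span {x : B | ∃ i : Fin ℓ, (x : MvPolynomial (Fin n) k) = D (f i)} with hJ
  have key : ∀ b (hb : b ∈ B), (⟨D b, himg b⟩ : B) ∈ J :=
    stmt13_key D B himg f hgen
  -- The extension of J to A
  set I : Ideal (MvPolynomial (Fin n) k) := J.map (algebraMap B (MvPolynomial (Fin n) k)) with hI
  have hIspan : I = Ideal.span ((algebraMap B (MvPolynomial (Fin n) k)) '' (J : Set B)) := rfl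
  -- I is D-stable
  have hstab : ∀ g ∈ I, D g ∈ I := by
    intro g hg
    rw [hIspan] at hg
    induction hg using Submodule.span_induction with
    | mem x hx =>
        obtain ⟨j, hjJ, rfl⟩ := hx
        have h1 : (⟨D (j : MvPolynomial (Fin n) k), himg _⟩ : B) ∈ J :=
          key (j : MvPolynomial (Fin n) k) j.2
        have h2 : D ((algebraMap B (MvPolynomial (Fin n) k)) j) =
            (algebraMap B (MvPolynomial (Fin n) k))
              (⟨D (j : MvPolynomial (Fin n) k), himg _⟩ : B) := rfl
        rw [h2]
        exact Ideal.mem_map_of_mem _ h1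
    | zero => simp
    | add a b ha hb iha ihb => simpa using add_mem iha ihb
    | smul a x hx ihx =>
        have hxI : x ∈ I := by rwa [hIspan]
        have hleib : D (a * x) = a * D x + D a * x := by
          simp [Derivation.leibniz, smul_eq_mul, mul_comm]
        rw [smul_eq_mul, hleib]
        exact add_mem (Ideal.mul_mem_left _ _ ihx) (Ideal.mul_mem_left _ _ hxI)
  rcases hsimple I hstab with hbot | htop
  · -- impossible: then all D (f i) = 0 and D vanishes on B, contradicting B ≠ ⊥
    exfalso
    have hDf : ∀ i, D (f i) = 0 := by
      intro i
      have hm : (algebraMap B (MvPolynomial (Fin n) k)) (⟨D (f i), himg _⟩ : B) ∈ I :=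
        Ideal.mem_map_of_mem _ (Ideal.subset_span ⟨i, rfl⟩)
      rw [hbot] at hm
      have h0 : (⟨D (f i), himg _⟩ : B) = 0 := by
        exact Subtype.ext (by simpa using hm)
      exact congrArg Subtype.val h0
    have hDB : ∀ b ∈ B, D b = 0 := by
      rw [← hgen]
      exact stmt13_vanish D f hDf
    obtain ⟨b, hbB, hbk⟩ : ∃ b ∈ B, b ∉ (⊥ : Subalgebra k (MvPolynomial (Fin n) k)) := by
      by_contra h
      push_neg at h
      exact hB (le_antisymm (fun x hx => h x hx) bot_le)
    have hbstab : ∀ g ∈ Ideal.span {b}, D g ∈ Ideal.span {b} := by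
      intro g hg
      rw [Ideal.mem_span_singleton] at hg
      obtain ⟨q, rfl⟩ := hg
      have hg' : D (b * q) = b * D q := by
        simp [Derivation.leibniz, smul_eq_mul, hDB b hbB]
      rw [hg']
      exact Ideal.mem_span_singleton.mpr ⟨D q, rfl⟩
    rcases hsimple _ hbstab with h | h
    · have hb0 : b = 0 := Ideal.span_singleton_eq_bot.mp h
      exact hbk (hb0 ▸ zero_mem _)
    · have hbu : IsUnit b := by rwa [Ideal.span_singleton_eq_top] at h
      exact hbk (mv_unit_mem_bot hbu)
  · -- map back to B via the B-algebra retraction ε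
    let e1 : MvPolynomial (Fin n) k ≃ₐ[B] (⊤ : Subalgebra B (MvPolynomial (Fin n) k)) := Subalgebra.topEquiv.symm
    let e3 : (⊤ : Subalgebra B (MvPolynomial (Fin n) k)) ≃ₐ[B] (Algebra.adjoin B (Set.range y)) :=
      Subalgebra.equivOfEq _ _ hyadj.symm
    let e2 : (Algebra.adjoin B (Set.range y)) ≃ₐ[B] MvPolynomial (Fin s) B :=
      hyind.aevalEquiv.symm
    let ε : MvPolynomial (Fin n) k →ₐ[B] B :=
      (MvPolynomial.aeval (fun _ : Fin s => (0 : B))).comp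
        ((e2.toAlgHom.comp e3.toAlgHom).comp e1.toAlgHom)
    have hcomp : (ε.toRingHom).comp (algebraMap B (MvPolynomial (Fin n) k)) = RingHom.id B := by
      ext b
      simpa using ε.commutes b
    have hback : J = Ideal.map ε.toRingHom I := by
      rw [hI, Ideal.map_map, hcomp, Ideal.map_id]
    rw [hback, htop, Ideal.map_top]
end

section
/- Let D be a simple derivation of k[x_1,...,x_n] admitting a linear coordinate s (D(s)=1 and s is part of a coordinate system), let φ ∈ Aut(D) be of the form e^Δ for a locally nilpotent derivation Δ commuting with D. Then Δ(s) ∈ k; consequently either φ(s) = s or φ is conjugate to a translation in the direction of s. -/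
open MvPolynomial
open scoped Classical

/-- Units of a multivariate polynomial ring over a field are (nonzero) constants. -/
lemma mv_isUnit_eq_C {k : Type} [Field k] : ∀ {n : ℕ} (f : MvPolynomial (Fin n) k),
    IsUnit f → ∃ c : k, f = C c := by
  intro n
  induction n with
  | zero => intro f _; exact ⟨_, (eq_C_of_isEmpty f)⟩
  | succ m ih =>
    intro f hf
    have h1 : IsUnit ((finSuccEquiv k m) f) := hf.map _
    obtain ⟨r, hr, hrf⟩ := Polynomial.isUnit_iff.1 h1
    obtain ⟨c, rfl⟩ := ih r hr
    refine ⟨c, ?_⟩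
    have hpc : (finSuccEquiv k m) f = Polynomial.C (C c) := hrf.symm
    have h2 : f = (finSuccEquiv k m).symm (Polynomial.C (C c)) := by
      rw [← hpc]; simp
    rw [h2]
    have h3 : (Polynomial.C (C c) : Polynomial (MvPolynomial (Fin m) k)) =
        algebraMap k _ c := rfl
    rw [h3, AlgEquiv.commutes]
    rfl

/-- The exponential automorphism `e^{Δ}` of a locally nilpotent derivation `Δ`,
applied to `f`: the (finite) sum `Σᵢ 1/i! · Δⁱ(f)`. -/
noncomputable def expDeriv {k : Type} [Field k] [CharZero k] {n : ℕ}
    (Δ : Derivation k (MvPolynomial (Fin n) k) (MvPolynomial (Fin n) k))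
    (hΔ : ∀ f, ∃ N, (⇑Δ)^[N] f = 0) (f : MvPolynomial (Fin n) k) :
    MvPolynomial (Fin n) k :=
  ∑ i ∈ Finset.range (Nat.find (hΔ f)), ((Nat.factorial i : k)⁻¹) • (⇑Δ)^[i] f

/-- The exponential sum may be truncated at any `M` with `Δ^[M] f = 0`. -/
lemma expDeriv_eq {k : Type} [Field k] [CharZero k] {n : ℕ}
    (Δ : Derivation k (MvPolynomial (Fin n) k) (MvPolynomial (Fin n) k))
    (hΔ : ∀ f, ∃ N, (⇑Δ)^[N] f = 0) (f : MvPolynomial (Fin n) k)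
    (M : ℕ) (hM : (⇑Δ)^[M] f = 0) :
    expDeriv Δ hΔ f = ∑ i ∈ Finset.range M, ((Nat.factorial i : k)⁻¹) • (⇑Δ)^[i] f := by
  unfold expDeriv
  apply Finset.sum_subset
  · exact Finset.range_subset_range.2 (Nat.find_le hM)
  · intro i _ hi
    simp only [Finset.mem_range, not_lt] at hi
    have h0 : (⇑Δ)^[i] f = 0 := by
      have hfind := Nat.find_spec (hΔ f)
      rw [← Nat.sub_add_cancel hi, Function.iterate_add_apply, hfind]
      clear hfind
      induction (i - Nat.find (hΔ f)) with
      | zero => rfl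
      | succ j ihj => rw [Function.iterate_succ_apply', ihj, map_zero]
    rw [h0, smul_zero]

/-- let `D` be a simple derivation of `k[x₁,…,xₙ]` admitting a linear
coordinate `s`, and `φ = e^Δ ∈ Aut(D)` for a locally nilpotent derivation `Δ` commuting
with `D`. Then `Δ s ∈ k`; consequently either `φ s = s` or `φ` translates `s` by a
nonzero constant. -/
theorem stmt14 {k : Type} [Field k] [CharZero k] [IsAlgClosed k] {n : ℕ}
    (D Δ : Derivation k (MvPolynomial (Fin n) k) (MvPolynomial (Fin n) k))
    (hsimple : ∀ I : Ideal (MvPolynomial (Fin n) k),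
      (∀ f ∈ I, D f ∈ I) → I = ⊥ ∨ I = ⊤)
    (s : MvPolynomial (Fin n) k) (hs : D s = 1)
    (hcoord : ∃ σ : Fin (n - 1) → MvPolynomial (Fin n) k,
      Algebra.adjoin k (insert s (Set.range σ)) = ⊤)
    (hΔ : ∀ f, ∃ N, (⇑Δ)^[N] f = 0)
    (hΔD : ∀ f, D (Δ f) = Δ (D f))
    (φ : MvPolynomial (Fin n) k ≃ₐ[k] MvPolynomial (Fin n) k)
    (hφ : ∀ f, φ f = expDeriv Δ hΔ f)
    (hAut : ∀ f, φ (D f) = D (φ f)) :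
    (∃ c : k, Δ s = C c) ∧
    (φ s = s ∨ ∃ c : k, c ≠ 0 ∧ φ s = s + C c) := by
  -- Key step: D (Δ s) = Δ (D s) = Δ 1 = 0
  have hDΔs : D (Δ s) = 0 := by
    rw [hΔD, hs]
    exact Δ.map_one_eq_zero
  -- the kernel of D consists of constants, by simplicity of D
  have hker : ∃ c : k, Δ s = C c := by
    have hstab : ∀ f ∈ Ideal.span {Δ s}, D f ∈ Ideal.span {Δ s} := by
      intro f hf
      rw [Ideal.mem_span_singleton] at hf ⊢
      obtain ⟨g, rfl⟩ := hf
      rw [Derivation.leibniz, smul_eq_mul, smul_eq_mul, hDΔs, mul_zero, add_zero]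
      exact Dvd.intro _ rfl
    rcases hsimple (Ideal.span {Δ s}) hstab with h | h
    · exact ⟨0, by
        have := Ideal.span_singleton_eq_bot.1 h
        simp [this]⟩
    · exact mv_isUnit_eq_C _ (Ideal.span_singleton_eq_top.1 h)
  obtain ⟨c, hcs⟩ := hker
  refine ⟨⟨c, hcs⟩, ?_⟩
  -- since Δ s is constant, Δ² s = 0
  have h2 : (⇑Δ)^[2] s = 0 := by
    show Δ (Δ s) = 0
    rw [hcs]
    have : (C c : MvPolynomial (Fin n) k) = algebraMap k _ c := rfl
    rw [this, Derivation.map_algebraMap]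
  have hφs : φ s = s + C c := by
    rw [hφ s, expDeriv_eq Δ hΔ s 2 h2]
    rw [Finset.sum_range_succ, Finset.sum_range_one]
    simp only [Function.iterate_one, Function.iterate_zero, id_eq, Nat.factorial_zero,
      Nat.factorial_one, Nat.cast_one, inv_one, one_smul, hcs]
  by_cases hc0 : c = 0
  · left; rw [hφs, hc0]; simp
  · right; exact ⟨c, hc0, hφs⟩
end

section
/- Let D be a simple derivation of k[x_1,...,x_n] admitting n commuting locally nilpotent derivations Δ_1,...,Δ_n, each commuting with D, with Δ_i(x_j) = δ_{ij} for all 1 ≤ i ≤ j ≤ n. Then n ≤ 1; i.e., for n ≥ 2 no such configuration exists. -/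
open MvPolynomial

section St19Aux

variable {k : Type} [Field k] [CharZero k] {n : ℕ}

private lemma st19_sum_apply (δs : Fin n → Derivation k (MvPolynomial (Fin n) k) (MvPolynomial (Fin n) k))
    (f : MvPolynomial (Fin n) k) : (∑ i, δs i) f = ∑ i, δs i f := by
  have := map_sum (Derivation.coeFnAddMonoidHom (R := k) (A := MvPolynomial (Fin n) k)
    (M := MvPolynomial (Fin n) k)) δs Finset.univ
  calc (∑ i, δs i) f = (Derivation.coeFnAddMonoidHom (∑ i, δs i)) f := rfl
    _ = _ := by rw [this]; exact Finset.sum_apply _ _ _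

/-- Any derivation is `∑ δ(Xᵢ) ∂ᵢ`. -/
private lemma st19_formula (δ : Derivation k (MvPolynomial (Fin n) k) (MvPolynomial (Fin n) k))
    (f : MvPolynomial (Fin n) k) : δ f = ∑ i, δ (X i) * pderiv i f := by
  have h : δ = ∑ i, δ (X i) • pderiv i := by
    apply MvPolynomial.derivation_ext
    intro j
    rw [st19_sum_apply]
    rw [Finset.sum_eq_single j]
    · rw [Derivation.smul_apply, pderiv_X_self, smul_eq_mul, mul_one]
    · intro i _ hij
      rw [Derivation.smul_apply, pderiv_X_of_ne (Ne.symm hij), smul_zero]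
    · intro h; exact absurd (Finset.mem_univ j) h
  conv_lhs => rw [h]
  rw [st19_sum_apply]
  refine Finset.sum_congr rfl fun i _ => ?_
  rw [Derivation.smul_apply, smul_eq_mul]

private lemma st19_coeff_pderiv (i : Fin n) (m : Fin n →₀ ℕ) (f : MvPolynomial (Fin n) k) :
    coeff m (pderiv i f) = ((m i + 1 : ℕ) : k) * coeff (m + Finsupp.single i 1) f := by
  induction f using MvPolynomial.induction_on' with
  | add p q hp hq => rw [map_add, coeff_add, coeff_add, hp, hq, mul_add]
  | monomial s a =>
    rw [pderiv_monomial, coeff_monomial, coeff_monomial]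
    by_cases h : s = m + Finsupp.single i 1
    · subst h
      have h1 : m + Finsupp.single i 1 - Finsupp.single i 1 = m := add_tsub_cancel_right _ _
      rw [if_pos h1, if_pos rfl]
      have h2 : (m + Finsupp.single i 1 : Fin n →₀ ℕ) i = m i + 1 := by
        rw [Finsupp.add_apply, Finsupp.single_eq_same]
      rw [h2]
      push_cast
      ring
    · rw [if_neg h]
      by_cases h2 : s - Finsupp.single i 1 = m
      · have hsi : s i = 0 := by
          by_contra hs
          apply h
          ext j
          have := DFunLike.congr_fun h2 j
          simp only [Finsupp.tsub_apply, Finsupp.add_apply] at this ⊢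
          rcases eq_or_ne j i with rfl | hji
          · simp only [Finsupp.single_eq_same] at this ⊢; omega
          · simp only [Finsupp.single_eq_of_ne' (Ne.symm hji)] at this ⊢; omega
        rw [if_pos h2, hsi]
        push_cast
        ring
      · rw [if_neg h2, mul_zero]

private lemma st19_support (i : Fin n) (f : MvPolynomial (Fin n) k) (h : pderiv i f = 0)
    {m : Fin n →₀ ℕ} (hm : m ∈ f.support) : m i = 0 := by
  by_contra hmi
  have h1 := st19_coeff_pderiv i (m - Finsupp.single i 1) f
  have hmm : (m - Finsupp.single i 1) + Finsupp.single i 1 = m :=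
    tsub_add_cancel_of_le (Finsupp.single_le_iff.mpr (by omega))
  rw [h, hmm] at h1
  have hcoeff : coeff m f ≠ 0 := MvPolynomial.mem_support_iff.mp hm
  have : coeff (m - Finsupp.single i 1) (0 : MvPolynomial (Fin n) k) = 0 := coeff_zero _
  rw [this] at h1
  have hne : (((m - Finsupp.single i 1 : Fin n →₀ ℕ) i + 1 : ℕ) : k) ≠ 0 :=
    Nat.cast_ne_zero.mpr (by omega)
  exact (mul_ne_zero hne hcoeff) h1.symm

private lemma st19_pderiv_zero
    (Δ : Fin n → Derivation k (MvPolynomial (Fin n) k) (MvPolynomial (Fin n) k))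
    (htri : ∀ i j : Fin n, i ≤ j → Δ i (X j) = if i = j then 1 else 0)
    (w : MvPolynomial (Fin n) k) (i0 : Fin n) (hw : ∀ i, i ≤ i0 → Δ i w = 0) :
    ∀ i, i ≤ i0 → pderiv i w = 0 := by
  have key : ∀ N : ℕ, ∀ i : Fin n, i ≤ i0 → i.val < N → pderiv i w = 0 := by
    intro N
    induction N with
    | zero => intro i _ h2; omega
    | succ N IH =>
      intro i hi hlt
      have h0 := hw i hi
      rw [st19_formula (Δ i) w, Finset.sum_eq_single i ?_ ?_] at h0
      · rw [htri i i le_rfl, if_pos rfl, one_mul] at h0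
        exact h0
      · intro j _ hji
        by_cases hj : (j : ℕ) < (i : ℕ)
        · have hji0 : j ≤ i0 := le_trans (by exact Fin.le_def.mpr (le_of_lt hj)) hi
          rw [IH j hji0 (by omega), mul_zero]
        · have hij : i ≤ j := Fin.le_def.mpr (by omega)
          rw [htri i j hij, if_neg (fun h => hji h.symm), zero_mul]
      · intro h; exact absurd (Finset.mem_univ i) h
  intro i hi
  exact key ((i : ℕ) + 1) i hi (Nat.lt_succ_self _)

private lemma st19_eq_C (w : MvPolynomial (Fin n) k) (h : ∀ i : Fin n, pderiv i w = 0) :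
    w = C (constantCoeff w) := by
  apply MvPolynomial.ext
  intro m
  rw [coeff_C]
  rcases eq_or_ne m 0 with rfl | hm
  · rw [if_pos rfl]; rfl
  · rw [if_neg (Ne.symm hm)]
    by_contra hc
    have hms : m ∈ w.support := MvPolynomial.mem_support_iff.mpr hc
    apply hm
    ext i
    exact st19_support i w (h i) hms

private lemma st19_antideriv (j : Fin n) (p : MvPolynomial (Fin n) k)
    (hp : ∀ m ∈ p.support, ∀ i : Fin n, i ≠ j → m i = 0) :
    ∃ A : MvPolynomial (Fin n) k, pderiv j A = p ∧ (∀ i : Fin n, i ≠ j → pderiv i A = 0) ∧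
      constantCoeff A = 0 := by
  refine ⟨∑ m ∈ p.support, monomial (m + Finsupp.single j 1) (coeff m p / ((m j : k) + 1)),
    ?_, ?_, ?_⟩
  · rw [map_sum]
    have heq : ∀ m ∈ p.support,
        pderiv j (monomial (m + Finsupp.single j 1) (coeff m p / ((m j : k) + 1)))
          = monomial m (coeff m p) := by
      intro m _
      rw [pderiv_monomial]
      have h1 : m + Finsupp.single j 1 - Finsupp.single j 1 = m := add_tsub_cancel_right _ _
      have h2 : (m + Finsupp.single j 1 : Fin n →₀ ℕ) j = m j + 1 := by
        rw [Finsupp.add_apply, Finsupp.single_eq_same]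
      rw [h1, h2]
      congr 1
      push_cast
      exact div_mul_cancel₀ _ (by exact_mod_cast Nat.succ_ne_zero (m j))
    rw [Finset.sum_congr rfl heq, ← MvPolynomial.as_sum]
  · intro i hij
    rw [map_sum]
    apply Finset.sum_eq_zero
    intro m hm
    rw [pderiv_monomial]
    have h2 : (m + Finsupp.single j 1 : Fin n →₀ ℕ) i = 0 := by
      simp only [Finsupp.add_apply, hp m hm i hij,
        Finsupp.single_eq_of_ne' (Ne.symm hij), add_zero]
    rw [h2]
    simp
  · rw [map_sum]
    apply Finset.sum_eq_zero
    intro m _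
    rw [constantCoeff_monomial, if_neg]
    intro h
    have := DFunLike.congr_fun h j
    simp [Finsupp.add_apply] at this

end St19Aux

/-- a simple derivation `D` of `k[x₁,…,xₙ]` cannot commute with a full
triangular system of `n` pairwise-commuting locally nilpotent derivations `Δ₁,…,Δₙ` with
`Δᵢ(xⱼ) = δᵢⱼ` for all `i ≤ j`; i.e. such a configuration forces `n ≤ 1`. -/
theorem stmt19 {k : Type} [Field k] [CharZero k] [IsAlgClosed k] {n : ℕ}
    (D : Derivation k (MvPolynomial (Fin n) k) (MvPolynomial (Fin n) k))
    (hsimple : ∀ I : Ideal (MvPolynomial (Fin n) k),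
      (∀ f ∈ I, D f ∈ I) → I = ⊥ ∨ I = ⊤)
    (Δ : Fin n → Derivation k (MvPolynomial (Fin n) k) (MvPolynomial (Fin n) k))
    (hln : ∀ i, ∀ f, ∃ N : ℕ, (⇑(Δ i))^[N] f = 0)
    (hpair : ∀ i j, ∀ f, Δ i (Δ j f) = Δ j (Δ i f))
    (hD : ∀ i, ∀ f, D (Δ i f) = Δ i (D f))
    (htri : ∀ i j : Fin n, i ≤ j → Δ i (X j) = if i = j then 1 else 0) :
    n ≤ 1 := by
  by_contra hn
  push_neg at hn
  have h2 : 2 ≤ n := hn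
  set j1 : Fin n := ⟨n - 2, by omega⟩ with hj1def
  set j2 : Fin n := ⟨n - 1, by omega⟩ with hj2def
  have hj12 : j1 ≠ j2 := by
    simp only [hj1def, hj2def, Fin.ne_iff_vne]
    omega
  -- D (X j2) is a constant
  have hw : ∀ i : Fin n, Δ i (D (X j2)) = 0 := by
    intro i
    have hij : i ≤ j2 := by
      simp only [hj2def, Fin.le_def]
      omega
    rw [← hD i (X j2), htri i j2 hij]
    rcases eq_or_ne i j2 with rfl | h
    · rw [if_pos rfl]; exact D.map_one_eq_zero
    · rw [if_neg h]; exact D.map_zero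
  have hpw : ∀ i : Fin n, pderiv i (D (X j2)) = 0 := fun i =>
    st19_pderiv_zero Δ htri _ j2 (fun i' _ => hw i') i
      (by simp only [hj2def, Fin.le_def]; omega)
  have hCc : D (X j2) = C (constantCoeff (D (X j2))) := st19_eq_C _ hpw
  set c : k := constantCoeff (D (X j2)) with hcdef
  -- produce a nonzero g with D g = 0 and zero constant term
  obtain ⟨g, hDg, hg0, hgc⟩ : ∃ g : MvPolynomial (Fin n) k,
      D g = 0 ∧ g ≠ 0 ∧ constantCoeff g = 0 := by
    rcases eq_or_ne c 0 with hc | hc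
    · refine ⟨X j2, ?_, X_ne_zero _, by simp⟩
      rw [hCc, hc, map_zero]
    · -- a := D (X j1) depends only on x_{j2}
      set a : MvPolynomial (Fin n) k := D (X j1) with hadef
      have ha : ∀ i : Fin n, i ≤ j1 → Δ i a = 0 := by
        intro i hij
        rw [hadef, ← hD i (X j1), htri i j1 hij]
        rcases eq_or_ne i j1 with rfl | h
        · rw [if_pos rfl]; exact D.map_one_eq_zero
        · rw [if_neg h]; exact D.map_zero
      have hpa : ∀ i : Fin n, i ≤ j1 → pderiv i a = 0 := st19_pderiv_zero Δ htri a j1 ha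
      have hsupp : ∀ m ∈ (c⁻¹ • a).support, ∀ i : Fin n, i ≠ j2 → m i = 0 := by
        intro m hm i hij2
        have hma : m ∈ a.support := by
          rw [MvPolynomial.mem_support_iff] at hm ⊢
          intro h0
          apply hm
          rw [MvPolynomial.coeff_smul, h0, smul_zero]
        have hle : i ≤ j1 := by
          have hne : (i : ℕ) ≠ n - 1 := by
            intro h
            exact hij2 (by simp only [hj2def, Fin.ext_iff, h])
          simp only [hj1def, Fin.le_def]
          omega
        exact st19_support i a (hpa i hle) hma
      obtain ⟨A, hA1, hA2, hA3⟩ := st19_antideriv j2 (c⁻¹ • a) hsupp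
      refine ⟨X j1 - A, ?_, ?_, ?_⟩
      · rw [map_sub]
        have hDA : D A = a := by
          rw [st19_formula D A, Finset.sum_eq_single j2 ?_ ?_]
          · rw [hA1, hCc, smul_eq_C_mul, ← mul_assoc, ← C_mul,
              mul_inv_cancel₀ hc, C_1, one_mul]
          · intro i _ hij
            rw [hA2 i hij, mul_zero]
          · intro h; exact absurd (Finset.mem_univ j2) h
        rw [hDA, hadef, sub_self]
      · intro h0
        have h1 := congrArg (⇑(pderiv j1)) h0
        rw [map_sub, pderiv_X_self, hA2 j1 hj12, sub_zero, map_zero] at h1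
        exact one_ne_zero h1
      · rw [map_sub, constantCoeff_X, hA3, sub_zero]
  -- the span of g is a D-stable ideal
  have hstable : ∀ f ∈ Ideal.span {g}, D f ∈ Ideal.span {g} := by
    intro f hf
    obtain ⟨t, ht⟩ := Ideal.mem_span_singleton'.mp hf
    rw [← ht, Derivation.leibniz, hDg, smul_zero, zero_add]
    exact Ideal.mem_span_singleton'.mpr ⟨D t, by rw [smul_eq_mul, mul_comm]⟩
  rcases hsimple (Ideal.span {g}) hstable with hbot | htop
  · have hg : g ∈ Ideal.span {g} := Ideal.subset_span (Set.mem_singleton g)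
    rw [hbot, Ideal.mem_bot] at hg
    exact hg0 hg
  · have h1 : (1 : MvPolynomial (Fin n) k) ∈ Ideal.span {g} := by
      rw [htop]; trivial
    obtain ⟨t, ht⟩ := Ideal.mem_span_singleton'.mp h1
    have := congrArg constantCoeff ht
    rw [map_mul, hgc, mul_zero, map_one] at this
    exact zero_ne_one this
end
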